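/- arXiv:1701.00140 — 6 statements merged into one kernel-verified Lean document; each statement's English description precedes it below -/
import Mathlib

section
/- Fix n : ℕ and let ω = exp(πi/4) ∈ ℂ. Let G_n be the subgroup of invertible linear operators on ℂ^{(Fin n → ZMod 2)} generated by the scalar operator ω • 1 together with: T_i (i : Fin n) with T_i e_x = ω^{(x i).val} • e_x; X_i with X_i e_x = e_{Function.update x i (x i + 1)}; and CNOT_{i,j} (i ≠ j) with CNOT_{i,j} e_x = e_{Function.update x j (x i + x j)}. Then for every W ∈ G_n there exist a phase normal form p : (Fin n → ZMod 2) → ZMod 8 (i.e., p x = a₀ + ∑_i (a i)·⟨x i⟩ + ∑_{i<j} ⟨b i j⟩·⟨x i + x j⟩ + ∑_{i<j<k} ⟨c i j k⟩·⟨x i + x j + x k⟩ for some data a₀ : ZMod 8, a : Fin n → ZMod 8, b on pairs i<j valued in ZMod 4, c on triples i<j<k valued in ZMod 2) and a bijective affine map f : (Fin n → ZMod 2) → (Fin n → ZMod 2) over ZMod 2 such that W e_x = ω^{(p x).val} • e_{f x} for every x : Fin n → ZMod 2. -/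
open scoped BigOperators

noncomputable section

/-- The `n`-qubit state space `ℂ^(Fin n → ZMod 2)`. -/
abbrev QState (n : ℕ) := (Fin n → ZMod 2) → ℂ

/-- The standard basis vector `e x`. -/
def e {n : ℕ} (x : Fin n → ZMod 2) : QState n := Pi.single x 1

/-- `ω = exp (π i / 4)`. -/
def ω : ℂ := Complex.exp (Real.pi * Complex.I / 4)

/-- The generators of the group of `n`-qubit CNOT-dihedral operators: the scalar `ω • 1`,
the `T` gates, the `X` gates, and the `CNOT` gates, each specified by its action on the
standard basis vectors. -/
def dihedralGens (n : ℕ) : Set (LinearMap.GeneralLinearGroup ℂ (QState n)) :=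
  {W | ∀ x, W.val (e x) = ω • e x} ∪
  {W | ∃ i : Fin n, ∀ x, W.val (e x) = ω ^ (x i).val • e x} ∪
  {W | ∃ i : Fin n, ∀ x, W.val (e x) = e (Function.update x i (x i + 1))} ∪
  {W | ∃ i j : Fin n, i ≠ j ∧ ∀ x, W.val (e x) = e (Function.update x j (x i + x j))}

/-- The group `G_n` of `n`-qubit CNOT-dihedral operators. -/
def dihedralGroup' (n : ℕ) : Subgroup (LinearMap.GeneralLinearGroup ℂ (QState n)) :=
  Subgroup.closure (dihedralGens n)

/-- The type of pairs `i < j` in `Fin n`. -/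
abbrev Pair (n : ℕ) := {p : Fin n × Fin n // p.1 < p.2}

/-- The type of triples `i < j < k` in `Fin n`. -/
abbrev Triple (n : ℕ) := {t : Fin n × Fin n × Fin n // t.1 < t.2.1 ∧ t.2.1 < t.2.2}

/-- The phase normal form with data `(a₀, a, b, c)`, as a function
`(Fin n → ZMod 2) → ZMod 8`. Here `⟨·⟩` is realized by casting `.val` into `ZMod 8`. -/
def pnf {n : ℕ} (a₀ : ZMod 8) (a : Fin n → ZMod 8) (b : Pair n → ZMod 4)
    (c : Triple n → ZMod 2) (x : Fin n → ZMod 2) : ZMod 8 :=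
  a₀ + ∑ i : Fin n, a i * ((x i).val : ZMod 8)
    + ∑ p : Pair n, ((b p).val : ZMod 8) * ((x p.val.1 + x p.val.2).val : ZMod 8)
    + ∑ t : Triple n,
        ((c t).val : ZMod 8) * ((x t.val.1 + x t.val.2.1 + x t.val.2.2).val : ZMod 8)

def β (s : ZMod 2) : ZMod 8 := (s.val : ZMod 8)
lemma βdef (s : ZMod 2) : (s.val : ZMod 8) = β s := rfl
lemma I1 : ∀ s : ZMod 2, β (1+s) = 1 - β s := by decide
lemma I2 : ∀ a b : ZMod 2, 4 * β (a+b) = 4*β a + 4*β b := by decide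
lemma I3 : ∀ a b c : ZMod 2, 2*β (a+b+c) = 2*β (a+b) + 2*β (a+c)+2*β (b+c) - 2*β a - 2*β b - 2*β c := by decide
lemma I4 : ∀ a b c d : ZMod 2, β (a+b+c+d) = β a + β b + β c + β d - β (a+b) - β (a+c) - β (a+d) - β (b+c) - β (b+d) - β (c+d) + β (a+b+c) + β (a+b+d) + β (a+c+d) + β (b+c+d) := by decide
lemma I5 : ∀ u v : ZMod 4, ∃ t : ZMod 8, (u.val:ZMod 8) + (v.val:ZMod 8) = ((u+v).val:ZMod 8) + 4*t := by decide
lemma I5' : ∀ u v : ZMod 2, ∃ t : ZMod 8, (u.val:ZMod 8) + (v.val:ZMod 8) = ((u+v).val:ZMod 8) + 2*t := by decide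
lemma dec4 : ∀ δ : ZMod 8, ∃ (r : ZMod 4) (s : ZMod 8), δ = (r.val:ZMod 8) + 4*s := by decide
lemma dec2 : ∀ δ : ZMod 8, ∃ (r : ZMod 2) (s : ZMod 8), δ = (r.val:ZMod 8) + 2*s := by decide

variable {n : ℕ}

def IsPnf (p : (Fin n → ZMod 2) → ZMod 8) : Prop :=
  ∃ a₀ a b c, ∀ x, p x = pnf a₀ a b c x

lemma isPnf_pnf (a₀ a b c) : IsPnf (n := n) (pnf a₀ a b c) := ⟨a₀, a, b, c, fun _ => rfl⟩

lemma IsPnf.congr {p q : (Fin n → ZMod 2) → ZMod 8} (h : IsPnf q) (he : ∀ x, p x = q x) :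
    IsPnf p := by
  obtain ⟨a₀, a, b, c, hq⟩ := h
  exact ⟨a₀, a, b, c, fun x => (he x).trans (hq x)⟩

lemma isPnf_const (a₀ : ZMod 8) : IsPnf (n := n) (fun _ => a₀) := by
  refine (isPnf_pnf a₀ 0 0 0).congr fun x => ?_
  simp [pnf]

lemma IsPnf.add_const {q} (h : IsPnf (n := n) q) (δ : ZMod 8) :
    IsPnf (fun x => q x + δ) := by
  obtain ⟨a₀, a, b, c, hq⟩ := h
  refine ⟨a₀ + δ, a, b, c, fun x => ?_⟩
  dsimp only; rw [hq x]; simp only [pnf]; ring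

lemma IsPnf.add_single {q} (h : IsPnf (n := n) q) (δ : ZMod 8) (i : Fin n) :
    IsPnf (fun x => q x + δ * β (x i)) := by
  obtain ⟨a₀, a, b, c, hq⟩ := h
  refine ⟨a₀, fun j => a j + if j = i then δ else 0, b, c, fun x => ?_⟩
  dsimp only; rw [hq x]; simp only [pnf, add_mul, ite_mul, zero_mul, Finset.sum_add_distrib,
    Finset.sum_ite_eq', Finset.mem_univ, if_true, βdef]
  ring

lemma IsPnf.add_pairβ {q} (h : IsPnf (n := n) q) (r : ZMod 4) {i j : Fin n} (hij : i < j) :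
    IsPnf (fun x => q x + (r.val : ZMod 8) * β (x i + x j)) := by
  obtain ⟨a₀, a, b, c, hq⟩ := h
  obtain ⟨t, ht⟩ := I5 (b ⟨(i, j), hij⟩) r
  have key : ∀ x, q x + (r.val : ZMod 8) * β (x i + x j)
      = pnf a₀ a (Function.update b ⟨(i, j), hij⟩ (b ⟨(i, j), hij⟩ + r)) c x
        + (4*t) * β (x i) + (4*t) * β (x j) := by
    intro x
    rw [hq x]
    simp only [pnf, βdef]
    rw [← Finset.sum_erase_add _ _ (Finset.mem_univ (⟨(i, j), hij⟩ : Pair n)),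
        ← Finset.sum_erase_add _ (fun p : Pair n =>
          ((Function.update b ⟨(i, j), hij⟩ (b ⟨(i, j), hij⟩ + r) p).val : ZMod 8)
            * β (x p.val.1 + x p.val.2)) (Finset.mem_univ (⟨(i, j), hij⟩ : Pair n))]
    have hE : ∑ p ∈ Finset.univ.erase (⟨(i, j), hij⟩ : Pair n),
        ((Function.update b ⟨(i, j), hij⟩ (b ⟨(i, j), hij⟩ + r) p).val : ZMod 8)
          * β (x p.val.1 + x p.val.2)
        = ∑ p ∈ Finset.univ.erase (⟨(i, j), hij⟩ : Pair n),
        ((b p).val : ZMod 8) * β (x p.val.1 + x p.val.2) :=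
      Finset.sum_congr rfl
        (fun p hp => by rw [Function.update_of_ne (Finset.ne_of_mem_erase hp)])
    rw [hE, Function.update_self]
    have h2 := I2 (x i) (x j)
    linear_combination (β (x i + x j)) * ht + t * h2
  exact (((isPnf_pnf _ _ _ _).add_single (4*t) i).add_single (4*t) j).congr key

lemma IsPnf.add_pair {q} (h : IsPnf (n := n) q) (δ : ZMod 8) {i j : Fin n} (hij : i < j) :
    IsPnf (fun x => q x + δ * β (x i + x j)) := by
  obtain ⟨r, s, rfl⟩ := dec4 δ
  refine (((h.add_pairβ r hij).add_single (4*s) i).add_single (4*s) j).congr fun x => ?_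
  have h2 := I2 (x i) (x j)
  linear_combination s * h2

lemma IsPnf.add_pair' {q} (h : IsPnf (n := n) q) (δ : ZMod 8) {i j : Fin n} (hij : i ≠ j) :
    IsPnf (fun x => q x + δ * β (x i + x j)) := by
  rcases hij.lt_or_gt with hlt | hlt
  · exact h.add_pair δ hlt
  · exact (h.add_pair δ hlt).congr fun x => by rw [add_comm (x i) (x j)]

lemma IsPnf.add_two_triple {q} (h : IsPnf (n := n) q) (s : ZMod 8) {i j k : Fin n}
    (hij : i < j) (hjk : j < k) :
    IsPnf (fun x => q x + s * (2 * β (x i + x j + x k))) := by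
  have hik : i < k := hij.trans hjk
  refine ((((((h.add_pair (2*s) hij).add_pair (2*s) hik).add_pair (2*s) hjk).add_single
    (-(2*s)) i).add_single (-(2*s)) j).add_single (-(2*s)) k).congr fun x => ?_
  have h3 := I3 (x i) (x j) (x k)
  linear_combination s * h3

lemma IsPnf.add_tripleβ {q} (h : IsPnf (n := n) q) (r : ZMod 2) {i j k : Fin n}
    (hij : i < j) (hjk : j < k) :
    IsPnf (fun x => q x + (r.val : ZMod 8) * β (x i + x j + x k)) := by
  obtain ⟨a₀, a, b, c, hq⟩ := h
  have hT : i < j ∧ j < k := ⟨hij, hjk⟩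
  obtain ⟨t, ht⟩ := I5' (c ⟨(i, j, k), hT⟩) r
  have key : ∀ x, q x + (r.val : ZMod 8) * β (x i + x j + x k)
      = pnf a₀ a b (Function.update c ⟨(i, j, k), hT⟩ (c ⟨(i, j, k), hT⟩ + r)) x
        + t * (2 * β (x i + x j + x k)) := by
    intro x
    rw [hq x]
    simp only [pnf, βdef]
    rw [← Finset.sum_erase_add _ _ (Finset.mem_univ (⟨(i, j, k), hT⟩ : Triple n)),
        ← Finset.sum_erase_add _ (fun p : Triple n =>
          β (Function.update c ⟨(i, j, k), hT⟩ (c ⟨(i, j, k), hT⟩ + r) p)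
            * β (x p.val.1 + x p.val.2.1 + x p.val.2.2)) (Finset.mem_univ (⟨(i, j, k), hT⟩ : Triple n))]
    have hE : ∑ p ∈ Finset.univ.erase (⟨(i, j, k), hT⟩ : Triple n),
        β (Function.update c ⟨(i, j, k), hT⟩ (c ⟨(i, j, k), hT⟩ + r) p)
          * β (x p.val.1 + x p.val.2.1 + x p.val.2.2)
        = ∑ p ∈ Finset.univ.erase (⟨(i, j, k), hT⟩ : Triple n),
        β (c p) * β (x p.val.1 + x p.val.2.1 + x p.val.2.2) :=
      Finset.sum_congr rfl
        (fun p hp => by rw [Function.update_of_ne (Finset.ne_of_mem_erase hp)])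
    rw [hE, Function.update_self]
    simp only [βdef] at ht
    linear_combination (β (x i + x j + x k)) * ht
  exact ((isPnf_pnf _ _ _ _).add_two_triple t hij hjk).congr key

lemma IsPnf.add_triple {q} (h : IsPnf (n := n) q) (δ : ZMod 8) {i j k : Fin n}
    (hij : i < j) (hjk : j < k) :
    IsPnf (fun x => q x + δ * β (x i + x j + x k)) := by
  obtain ⟨r, s, rfl⟩ := dec2 δ
  refine ((h.add_tripleβ r hij hjk).add_two_triple s hij hjk).congr fun x => ?_
  ring

lemma IsPnf.add_triple' {q} (h : IsPnf (n := n) q) (δ : ZMod 8) {i j k : Fin n}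
    (hij : i ≠ j) (hik : i ≠ k) (hjk : j ≠ k) :
    IsPnf (fun x => q x + δ * β (x i + x j + x k)) := by
  rcases hij.lt_or_gt with h1 | h1 <;> rcases hik.lt_or_gt with h2 | h2 <;>
    rcases hjk.lt_or_gt with h3 | h3
  · exact h.add_triple δ h1 h3
  · exact (h.add_triple δ h2 h3).congr fun x => by
      rw [show x i + x j + x k = x i + x k + x j by abel]
  · exact absurd (h2.trans h1) (not_lt.2 h3.le)
  · exact (h.add_triple δ h2 h1).congr fun x => by
      rw [show x i + x j + x k = x k + x i + x j by abel]
  · exact (h.add_triple δ h1 h2).congr fun x => by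
      rw [show x i + x j + x k = x j + x i + x k by abel]
  · exact absurd (h2.trans h3) (not_lt.2 h1.le)
  · exact (h.add_triple δ h3 h2).congr fun x => by
      rw [show x i + x j + x k = x j + x k + x i by abel]
  · exact (h.add_triple δ h3 h1).congr fun x => by
      rw [show x i + x j + x k = x k + x j + x i by abel]

lemma IsPnf.add_parity_small {q} (hq : IsPnf (n := n) q) (S : Finset (Fin n)) (hS : S.card ≤ 3)
    (δ : ZMod 8) : IsPnf (fun x => q x + δ * β (∑ i ∈ S, x i)) := by
  rcases (by omega : S.card = 0 ∨ S.card = 1 ∨ S.card = 2 ∨ S.card = 3) with hc | hc | hc | hc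
  · rw [Finset.card_eq_zero] at hc; subst hc
    exact hq.congr fun x => by simp [β]
  · obtain ⟨i, rfl⟩ := Finset.card_eq_one.mp hc
    exact (hq.add_single δ i).congr fun x => by rw [Finset.sum_singleton]
  · obtain ⟨i, j, hne, rfl⟩ := Finset.card_eq_two.mp hc
    exact (hq.add_pair' δ hne).congr fun x => by rw [Finset.sum_pair hne]
  · obtain ⟨i, j, k, hij, hik, hjk, rfl⟩ := Finset.card_eq_three.mp hc
    refine (hq.add_triple' δ hij hik hjk).congr fun x => ?_
    rw [show ({i, j, k} : Finset (Fin n)) = insert i {j, k} from rfl,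
      Finset.sum_insert (by simp [hij, hik]), Finset.sum_pair hjk, ← add_assoc]

lemma IsPnf.add_parity_aux (m : ℕ) : ∀ (S : Finset (Fin n)), S.card ≤ m →
    ∀ q, IsPnf (n := n) q → ∀ δ : ZMod 8, IsPnf (fun x => q x + δ * β (∑ i ∈ S, x i)) := by
  induction m with
  | zero => exact fun S hS q hq δ => hq.add_parity_small S (by omega) δ
  | succ m IH =>
    intro S hS q hq δ
    by_cases hsmall : S.card ≤ 3
    · exact hq.add_parity_small S hsmall δ
    have h4 : 4 ≤ S.card := by omega
    obtain ⟨a, ha⟩ := Finset.card_pos.mp (show 0 < S.card by omega)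
    obtain ⟨b, hb⟩ := Finset.card_pos.mp
      (show 0 < (S.erase a).card by rw [Finset.card_erase_of_mem ha]; omega)
    obtain ⟨c, hc⟩ := Finset.card_pos.mp
      (show 0 < ((S.erase a).erase b).card by
        rw [Finset.card_erase_of_mem hb, Finset.card_erase_of_mem ha]; omega)
    set T := ((S.erase a).erase b).erase c with hT
    have hab : a ≠ b := (Finset.ne_of_mem_erase hb).symm
    have hbc : b ≠ c := (Finset.ne_of_mem_erase hc).symm
    have hac : a ≠ c := (Finset.ne_of_mem_erase (Finset.mem_of_mem_erase hc)).symm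
    have haT : a ∉ T := fun h =>
      Finset.notMem_erase a S (Finset.mem_of_mem_erase (Finset.mem_of_mem_erase h))
    have hbT : b ∉ T := fun h => Finset.notMem_erase b _ (Finset.mem_of_mem_erase h)
    have hcT : c ∉ T := Finset.notMem_erase c _
    have hTcard : T.card + 3 = S.card := by
      rw [hT, Finset.card_erase_of_mem hc, Finset.card_erase_of_mem hb,
        Finset.card_erase_of_mem ha]
      omega
    have hTm : T.card + 2 ≤ m := by omega
    have hsum : ∀ x : Fin n → ZMod 2, ∑ i ∈ S, x i = x a + x b + x c + ∑ i ∈ T, x i := by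
      intro x
      rw [← Finset.add_sum_erase S _ ha, ← Finset.add_sum_erase (S.erase a) _ hb,
        ← Finset.add_sum_erase ((S.erase a).erase b) _ hc, ← hT]
      ring
    -- chain
    have h1 := ((hq.add_single δ a).add_single δ b).add_single δ c
    have h2 := IH T (by omega) _ h1 δ
    have h3 := ((h2.add_pair' (-δ) hab).add_pair' (-δ) hac).add_pair' (-δ) hbc
    have h4a := (IH (insert a T) ((Finset.card_insert_le _ _).trans (by omega)) _ h3 (-δ)).congr
      (fun x => by rw [Finset.sum_insert haT])
    have h4b := (IH (insert b T) ((Finset.card_insert_le _ _).trans (by omega)) _ h4a (-δ)).congr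
      (fun x => by rw [Finset.sum_insert hbT])
    have h4c := (IH (insert c T) ((Finset.card_insert_le _ _).trans (by omega)) _ h4b (-δ)).congr
      (fun x => by rw [Finset.sum_insert hcT])
    have h5 := h4c.add_triple' δ hab hac hbc
    have hbT' : a ∉ insert b T := by simp [hab, haT]
    have hcT' : a ∉ insert c T := by simp [hac, haT]
    have hcT'' : b ∉ insert c T := by simp [hbc, hbT]
    have h6a := (IH (insert a (insert b T))
        (((Finset.card_insert_le _ _).trans (Nat.succ_le_succ (Finset.card_insert_le _ _))).trans (by omega)) _ h5 δ).congr
      (fun x => by rw [Finset.sum_insert hbT', Finset.sum_insert hbT, ← add_assoc])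
    have h6b := (IH (insert a (insert c T))
        (((Finset.card_insert_le _ _).trans (Nat.succ_le_succ (Finset.card_insert_le _ _))).trans (by omega)) _ h6a δ).congr
      (fun x => by rw [Finset.sum_insert hcT', Finset.sum_insert hcT, ← add_assoc])
    have h6c := (IH (insert b (insert c T))
        (((Finset.card_insert_le _ _).trans (Nat.succ_le_succ (Finset.card_insert_le _ _))).trans (by omega)) _ h6b δ).congr
      (fun x => by rw [Finset.sum_insert hcT'', Finset.sum_insert hcT, ← add_assoc])
    refine h6c.congr fun x => ?_
    rw [hsum x]
    have h14 := I4 (x a) (x b) (x c) (∑ i ∈ T, x i)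
    linear_combination δ * h14

lemma IsPnf.add_parity {q} (hq : IsPnf (n := n) q) (S : Finset (Fin n)) (δ : ZMod 8) :
    IsPnf (fun x => q x + δ * β (∑ i ∈ S, x i)) :=
  IsPnf.add_parity_aux S.card S le_rfl q hq δ

lemma IsPnf.add_affine_term {q} (hq : IsPnf (n := n) q) (δ : ZMod 8) (c₀ : ZMod 2)
    (w : Fin n → ZMod 2) :
    IsPnf (fun x => q x + δ * β (c₀ + ∑ j, w j * x j)) := by
  have hw : ∀ x : Fin n → ZMod 2, ∑ j, w j * x j = ∑ j ∈ Finset.univ.filter (fun j => w j = 1), x j := by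
    intro x
    rw [Finset.sum_filter]
    refine Finset.sum_congr rfl fun j _ => ?_
    rcases (by decide : ∀ u : ZMod 2, u = 0 ∨ u = 1) (w j) with h | h <;> simp [h]
  rcases (by decide : ∀ u : ZMod 2, u = 0 ∨ u = 1) c₀ with h | h
  · subst h
    exact (hq.add_parity _ δ).congr fun x => by rw [zero_add, hw x]
  · subst h
    refine ((hq.add_const δ).add_parity (Finset.univ.filter (fun j => w j = 1)) (-δ)).congr fun x => ?_
    rw [← hw x]
    have := I1 (∑ j, w j * x j)
    linear_combination δ * this

lemma IsPnf.add_affine_sum {ι : Type} [DecidableEq ι] {q} (hq : IsPnf (n := n) q)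
    (F : Finset ι) (δ : ι → ZMod 8) (c : ι → ZMod 2) (w : ι → Fin n → ZMod 2) :
    IsPnf (fun x => q x + ∑ i ∈ F, δ i * β (c i + ∑ j, w i j * x j)) := by
  induction F using Finset.induction with
  | empty => exact hq.congr fun x => by simp
  | @insert i F hnot IH =>
    refine (IH.add_affine_term (δ i) (c i) (w i)).congr fun x => ?_
    rw [Finset.sum_insert hnot]
    ring

lemma affine_parity (f : (Fin n → ZMod 2) ≃ᵃ[ZMod 2] (Fin n → ZMod 2))
    (Tset : Finset (Fin n)) :
    ∃ (c₀ : ZMod 2) (w : Fin n → ZMod 2), ∀ x, ∑ i ∈ Tset, f x i = c₀ + ∑ j, w j * x j := by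
  have hfx : ∀ y : Fin n → ZMod 2, f y = f.linear y + f 0 := by
    intro y
    have h := f.map_vadd 0 y
    simpa [vadd_eq_add] using h
  refine ⟨∑ i ∈ Tset, f 0 i,
    fun j => ∑ i ∈ Tset, f.linear (fun k => if j = k then 1 else 0) i, fun x => ?_⟩
  have hx : (x : Fin n → ZMod 2) = ∑ j : Fin n, x j • fun k => if j = k then (1 : ZMod 2) else 0 := by
    conv_lhs => rw [pi_eq_sum_univ x]
  have hlin : f.linear x = ∑ j : Fin n, x j • f.linear (fun k => if j = k then 1 else 0) := by
    conv_lhs => rw [hx]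
    rw [map_sum]
    exact Finset.sum_congr rfl fun j _ => by rw [map_smul]
  calc ∑ i ∈ Tset, f x i = ∑ i ∈ Tset, (f.linear x i + f 0 i) := by
        refine Finset.sum_congr rfl fun i _ => ?_
        rw [hfx x]; rfl
    _ = ∑ i ∈ Tset, f.linear x i + ∑ i ∈ Tset, f 0 i := Finset.sum_add_distrib
    _ = _ := by
        rw [add_comm]
        congr 1
        rw [hlin]
        calc ∑ i ∈ Tset, (∑ j : Fin n, x j • f.linear (fun k => if j = k then 1 else 0)) i
            = ∑ i ∈ Tset, ∑ j : Fin n, x j * f.linear (fun k => if j = k then 1 else 0) i := by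
              refine Finset.sum_congr rfl fun i _ => ?_
              rw [Finset.sum_apply]
              exact Finset.sum_congr rfl fun j _ => rfl
          _ = ∑ j : Fin n, ∑ i ∈ Tset, x j * f.linear (fun k => if j = k then 1 else 0) i :=
              Finset.sum_comm
          _ = _ := Finset.sum_congr rfl fun j _ => by rw [← Finset.mul_sum, mul_comm]

lemma IsPnf.add_comp {q p} (hq : IsPnf (n := n) q) (hp : IsPnf (n := n) p) (ε : ZMod 8)
    (f : (Fin n → ZMod 2) ≃ᵃ[ZMod 2] (Fin n → ZMod 2)) :
    IsPnf (fun x => q x + ε * p (f x)) := by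
  obtain ⟨a₀, a, b, c, hpe⟩ := hp
  choose c1 w1 h1 using fun i : Fin n => affine_parity f {i}
  choose c2 w2 h2 using fun P : Pair n => affine_parity f {P.val.1, P.val.2}
  choose c3 w3 h3 using fun T : Triple n => affine_parity f {T.val.1, T.val.2.1, T.val.2.2}
  refine ((((hq.add_const (ε * a₀)).add_affine_sum Finset.univ (fun i => ε * a i) c1 w1
    ).add_affine_sum Finset.univ (fun P => ε * ((b P).val : ZMod 8)) c2 w2
    ).add_affine_sum Finset.univ (fun T => ε * ((c T).val : ZMod 8)) c3 w3).congr fun x => ?_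
  rw [hpe (f x)]
  simp only [pnf, βdef]
  have eA : ∑ i : Fin n, ε * a i * β (c1 i + ∑ j, w1 i j * x j)
      = ε * ∑ i : Fin n, a i * β (f x i) := by
    rw [Finset.mul_sum]
    refine Finset.sum_congr rfl fun i _ => ?_
    rw [← h1 i x, Finset.sum_singleton]
    ring
  have eB : ∑ P : Pair n, ε * ((b P).val : ZMod 8) * β (c2 P + ∑ j, w2 P j * x j)
      = ε * ∑ P : Pair n, ((b P).val : ZMod 8) * β (f x P.val.1 + f x P.val.2) := by
    rw [Finset.mul_sum]
    refine Finset.sum_congr rfl fun P _ => ?_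
    rw [← h2 P x, Finset.sum_pair P.prop.ne]
    ring
  have eC : ∑ T : Triple n, ε * β (c T) * β (c3 T + ∑ j, w3 T j * x j)
      = ε * ∑ T : Triple n, β (c T)
          * β (f x T.val.1 + f x T.val.2.1 + f x T.val.2.2) := by
    rw [Finset.mul_sum]
    refine Finset.sum_congr rfl fun T _ => ?_
    have hne1 : T.val.2.1 ≠ T.val.2.2 := T.prop.2.ne
    have hni : T.val.1 ∉ ({T.val.2.1, T.val.2.2} : Finset (Fin n)) := by
      simp [T.prop.1.ne, (T.prop.1.trans T.prop.2).ne]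
    rw [← h3 T x, show ({T.val.1, T.val.2.1, T.val.2.2} : Finset (Fin n))
        = insert T.val.1 {T.val.2.1, T.val.2.2} from rfl,
      Finset.sum_insert hni, Finset.sum_pair hne1, ← add_assoc]
    ring
  rw [eA, eB, eC]
  ring

lemma ω_ne_zero : ω ≠ 0 := Complex.exp_ne_zero _

lemma ω_pow_eight : ω ^ 8 = 1 := by
  rw [ω, ← Complex.exp_nat_mul,
    show (8 : ℕ) * (Real.pi * Complex.I / 4) = 2 * Real.pi * Complex.I by push_cast; ring]
  exact Complex.exp_two_pi_mul_I

lemma ω_pow_mod (m : ℕ) : ω ^ m = ω ^ (m % 8) := by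
  conv_lhs => rw [← Nat.mod_add_div m 8]
  rw [pow_add, pow_mul, ω_pow_eight, one_pow, mul_one]

lemma ω_zmod_add (a b : ZMod 8) : ω ^ a.val * ω ^ b.val = ω ^ (a + b).val := by
  rw [← pow_add, ω_pow_mod (a.val + b.val), ω_pow_mod (a + b).val, ZMod.val_add]
  simp [Nat.mod_mod_of_dvd]

/-- CNOT as a linear involution. -/
def cnotLin {n : ℕ} (i j : Fin n) (hij : i ≠ j) :
    (Fin n → ZMod 2) →ₗ[ZMod 2] (Fin n → ZMod 2) where
  toFun x := Function.update x j (x i + x j)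
  map_add' x y := by
    funext k
    by_cases hk : k = j
    · subst hk
      simp [Function.update_self]
      ring
    · simp [Function.update_of_ne hk]
  map_smul' c x := by
    funext k
    by_cases hk : k = j
    · subst hk
      simp [Function.update_self, smul_eq_mul]
      ring
    · simp [Function.update_of_ne hk]

lemma cnotLin_invol {n : ℕ} (i j : Fin n) (hij : i ≠ j) :
    (cnotLin i j hij).comp (cnotLin i j hij) = LinearMap.id := by
  apply LinearMap.ext
  intro x
  funext k
  have h2 : ∀ u : ZMod 2, u + u = 0 := by decide
  simp only [LinearMap.comp_apply, LinearMap.id_apply, cnotLin, LinearMap.coe_mk,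
    AddHom.coe_mk]
  by_cases hk : k = j
  · subst hk
    rw [Function.update_self, Function.update_of_ne hij, Function.update_self,
      ← add_assoc, h2 (x i), zero_add]
  · rw [Function.update_of_ne hk, Function.update_of_ne hk]

def cnotAff {n : ℕ} (i j : Fin n) (hij : i ≠ j) :
    (Fin n → ZMod 2) ≃ᵃ[ZMod 2] (Fin n → ZMod 2) :=
  (LinearEquiv.ofLinear (cnotLin i j hij) (cnotLin i j hij)
    (cnotLin_invol i j hij) (cnotLin_invol i j hij)).toAffineEquiv

lemma cnotAff_apply {n : ℕ} (i j : Fin n) (hij : i ≠ j) (x : Fin n → ZMod 2) :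
    cnotAff i j hij x = Function.update x j (x i + x j) := rfl

theorem stmt8 {n : ℕ} (W : LinearMap.GeneralLinearGroup ℂ (QState n))
    (hW : W ∈ dihedralGroup' n) :
    ∃ (a₀ : ZMod 8) (a : Fin n → ZMod 8) (b : Pair n → ZMod 4) (c : Triple n → ZMod 2)
      (f : (Fin n → ZMod 2) ≃ᵃ[ZMod 2] (Fin n → ZMod 2)),
      ∀ x : Fin n → ZMod 2,
        W.val (e x) = ω ^ (pnf a₀ a b c x).val • e (f x) := by
  have main : ∃ (p : (Fin n → ZMod 2) → ZMod 8), IsPnf p ∧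
      ∃ f : (Fin n → ZMod 2) ≃ᵃ[ZMod 2] (Fin n → ZMod 2),
      ∀ x, W.val (e x) = ω ^ (p x).val • e (f x) := by
    induction hW using Subgroup.closure_induction with
    | mem V hv =>
      rcases hv with ((hv | hv) | hv) | hv
      · -- scalar ω
        refine ⟨fun _ => 1, isPnf_const 1, AffineEquiv.refl _ _, fun x => ?_⟩
        rw [hv x]
        simp [AffineEquiv.refl_apply, show ((1 : ZMod 8)).val = 1 from rfl]
      · -- T gate
        obtain ⟨i, hvi⟩ := hv
        refine ⟨fun x => ((x i).val : ZMod 8),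
          ((isPnf_const 0).add_single 1 i).congr fun x => by simp [β, βdef], 
          AffineEquiv.refl _ _, fun x => ?_⟩
        rw [hvi x, AffineEquiv.refl_apply]
        congr 1
        rw [ZMod.val_cast_of_lt]
        have := ZMod.val_lt (x i)
        omega
      · -- X gate
        obtain ⟨i, hvi⟩ := hv
        refine ⟨fun _ => 0, isPnf_const 0,
          AffineEquiv.constVAdd (ZMod 2) (Fin n → ZMod 2) (Pi.single i 1), fun x => ?_⟩
        rw [hvi x]
        have hx : Function.update x i (x i + 1)
            = (AffineEquiv.constVAdd (ZMod 2) (Fin n → ZMod 2) (Pi.single i 1)) x := by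
          funext k
          by_cases hk : k = i
          · subst hk
            simp [Function.update_self, AffineEquiv.constVAdd_apply, vadd_eq_add,
              Pi.single_eq_same, add_comm]
          · simp [Function.update_of_ne hk, AffineEquiv.constVAdd_apply, vadd_eq_add,
              Pi.single_eq_of_ne hk]
        rw [hx]
        simp [ZMod.val_zero]
      · -- CNOT gate
        obtain ⟨i, j, hij, hvi⟩ := hv
        refine ⟨fun _ => 0, isPnf_const 0, cnotAff i j hij, fun x => ?_⟩
        rw [hvi x, cnotAff_apply]
        simp [ZMod.val_zero]
    | one =>
      refine ⟨fun _ => 0, isPnf_const 0, AffineEquiv.refl _ _, fun x => ?_⟩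
      simp [Units.val_one, ZMod.val_zero, AffineEquiv.refl_apply]
    | mul V₁ V₂ h1 h2 ih1 ih2 =>
      obtain ⟨p₁, hp₁, f₁, he₁⟩ := ih1
      obtain ⟨p₂, hp₂, f₂, he₂⟩ := ih2
      refine ⟨fun x => p₂ x + p₁ (f₂ x),
        (hp₂.add_comp hp₁ 1 f₂).congr fun x => by ring, f₂.trans f₁, fun x => ?_⟩
      have hm : (V₁ * V₂).val (e x) = V₁.val (V₂.val (e x)) := by
        rw [Units.val_mul]; rfl
      rw [hm, he₂ x, map_smul, he₁ (f₂ x), smul_smul, ω_zmod_add]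
      rfl
    | inv V hv ih =>
      obtain ⟨p, hp, f, he⟩ := ih
      refine ⟨fun y => -p (f.symm y),
        ((isPnf_const 0).add_comp hp (-1) f.symm).congr fun y => by ring, f.symm, fun y => ?_⟩
      have h0 : V.val (e (f.symm y)) = ω ^ (p (f.symm y)).val • e y := by
        rw [he (f.symm y), f.apply_symm_apply]
      have hinv : V⁻¹.val (V.val (e (f.symm y))) = e (f.symm y) := by
        have : (V⁻¹.val * V.val : QState n →ₗ[ℂ] QState n) = 1 := by
          rw [← Units.val_mul, inv_mul_cancel, Units.val_one]
        calc V⁻¹.val (V.val (e (f.symm y)))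
            = (V⁻¹.val * V.val) (e (f.symm y)) := rfl
          _ = e (f.symm y) := by rw [this]; rfl
      have key : ω ^ (p (f.symm y)).val • V⁻¹.val (e y) = e (f.symm y) := by
        rw [← map_smul, ← h0, hinv]
      have hq0 : (-p (f.symm y)) + p (f.symm y) = 0 := neg_add_cancel _
      calc V⁻¹.val (e y)
          = (ω ^ (-p (f.symm y)).val * ω ^ (p (f.symm y)).val) • V⁻¹.val (e y) := by
            rw [ω_zmod_add, hq0]
            norm_num [ZMod.val_zero]
        _ = ω ^ (-p (f.symm y)).val • (ω ^ (p (f.symm y)).val • V⁻¹.val (e y)) :=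
            mul_smul _ _ _
        _ = ω ^ (-p (f.symm y)).val • e (f.symm y) := by rw [key]
  obtain ⟨p, ⟨a₀, a, b, c, hp⟩, f, he⟩ := main
  exact ⟨a₀, a, b, c, f, fun x => by rw [he x, hp x]⟩
end
end

section
/- Fix n : ℕ and let ω = exp(πi/4) ∈ ℂ. Let G_n be the subgroup of invertible linear operators on ℂ^{(Fin n → ZMod 2)} generated by the scalar operator ω • 1 together with: T_i (i : Fin n) with T_i e_x = ω^{(x i).val} • e_x; X_i with X_i e_x = e_{Function.update x i (x i + 1)}; and CNOT_{i,j} (i ≠ j) with CNOT_{i,j} e_x = e_{Function.update x j (x i + x j)}. Then for every function p : (Fin n → ZMod 2) → ZMod 8 and every bijective affine map f : (Fin n → ZMod 2) → (Fin n → ZMod 2) over ZMod 2, the operator W defined by W e_x = ω^{(p x).val} • e_{f x} belongs to G_n, provided p is a phase normal form (i.e., p x = a₀ + ∑_i (a i)·⟨x i⟩ + ∑_{i<j} ⟨b i j⟩·⟨x i + x j⟩ + ∑_{i<j<k} ⟨c i j k⟩·⟨x i + x j + x k⟩ for some data a₀ : ZMod 8, a : Fin n → ZMod 8, b on pairs i<j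 valued in ZMod 4, c on triples i<j<k valued in ZMod 2). -/
/-!
An operator `e x ↦ ω ^ q x • e (σ x)` is the permutation operator of `σ` times the diagonal
operator of `q`. The phases `q` whose diagonal operator lies in `G_n` form a `ZMod 8`-submodule
containing the constant `1` (the scalar `ω • 1`) and `⟨x i⟩` (the `T` gates); it is stable under
precomposition with the permutations whose operator lies in `G_n`, since conjugation by a
permutation operator precomposes the phase. Those permutations contain the `X` gates and the
CNOTs, hence all translations and, since over `ZMod 2` every invertible matrix is a product of
transvections and each transvection is `1` or a CNOT, all linear and so all affine bijections.
Conjugating `T` gates by CNOTs yields every parity `⟨∑ k ∈ s, x k⟩`, and a phase normal form is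
a `ZMod 8`-combination of `1` and such parities.
-/

open scoped BigOperators

noncomputable section

section CNOTDihedral

variable {n : ℕ}

def ωPow (k : ZMod 8) : ℂˣ := Units.mk0 ω ω_ne_zero ^ k.val

lemma coe_ωPow (k : ZMod 8) : (ωPow k : ℂ) = ω ^ k.val := by
  rw [ωPow, Units.val_pow_eq_pow_val, Units.val_mk0]

lemma ωPow_add (k l : ZMod 8) : ωPow (k + l) = ωPow k * ωPow l := by
  ext
  rw [Units.val_mul, coe_ωPow, coe_ωPow, coe_ωPow, ← pow_add, ZMod.val_add,
    ← pow_eq_pow_mod _ ω_pow_eight]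

lemma ωPow_zero : ωPow 0 = 1 := pow_zero _

def monomialOp (σ : Equiv.Perm (Fin n → ZMod 2)) (u : (Fin n → ZMod 2) → ℂˣ) :
    LinearMap.GeneralLinearGroup ℂ (QState n) :=
  .ofLinearEquiv
    { toFun v y := u (σ.symm y) * v (σ.symm y)
      invFun v x := ↑(u x)⁻¹ * v (σ x)
      map_add' v w := by funext y; simp [mul_add]
      map_smul' c v := by funext y; simp [mul_left_comm]
      left_inv v := by funext x; simp
      right_inv v := by funext y; simp }

lemma monomialOp_e (σ : Equiv.Perm (Fin n → ZMod 2)) (u : (Fin n → ZMod 2) → ℂˣ)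
    (x : Fin n → ZMod 2) : (monomialOp σ u).val (e x) = (u x : ℂ) • e (σ x) := by
  funext y
  obtain ⟨x', rfl⟩ := σ.surjective y
  by_cases h : x' = x <;> simp [monomialOp, e, h]

lemma generalLinearGroup_ext_e {A B : LinearMap.GeneralLinearGroup ℂ (QState n)}
    (h : ∀ x, A.val (e x) = B.val (e x)) : A = B :=
  Units.ext <| (Pi.basisFun ℂ _).ext fun x => by simpa [e] using h x

lemma monomialOp_mul (σ τ : Equiv.Perm (Fin n → ZMod 2)) (u v : (Fin n → ZMod 2) → ℂˣ) :
    monomialOp σ u * monomialOp τ v = monomialOp (σ * τ) (fun x => u (τ x) * v x) :=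
  generalLinearGroup_ext_e fun x => by
    simp [Module.End.mul_apply, monomialOp_e, smul_smul, mul_comm]

lemma monomialOp_one : monomialOp (n := n) 1 1 = 1 :=
  generalLinearGroup_ext_e fun x => by simp [monomialOp_e]

def phaseOp (q : (Fin n → ZMod 2) → ZMod 8) : LinearMap.GeneralLinearGroup ℂ (QState n) :=
  monomialOp 1 fun x => ωPow (q x)

def permOp : Equiv.Perm (Fin n → ZMod 2) →* LinearMap.GeneralLinearGroup ℂ (QState n) where
  toFun σ := monomialOp σ 1
  map_one' := monomialOp_one
  map_mul' σ τ := by rw [monomialOp_mul]; congr; funext x; exact (mul_one 1).symm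

lemma phaseOp_zero : phaseOp (n := n) 0 = 1 := by
  simp only [phaseOp, Pi.zero_apply, ωPow_zero]
  exact monomialOp_one

lemma phaseOp_add (q r : (Fin n → ZMod 2) → ZMod 8) :
    phaseOp (q + r) = phaseOp q * phaseOp r := by
  simp [phaseOp, monomialOp_mul, ωPow_add]

lemma phaseOp_mul_permOp (q : (Fin n → ZMod 2) → ZMod 8) (σ : Equiv.Perm (Fin n → ZMod 2)) :
    phaseOp q * permOp σ = permOp σ * phaseOp (q ∘ σ) := by
  simp [phaseOp, permOp, monomialOp_mul]

def phaseSubmodule (n : ℕ) : Submodule (ZMod 8) ((Fin n → ZMod 2) → ZMod 8) :=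
  AddSubgroup.toZModSubmodule 8
    { carrier := {q | phaseOp q ∈ dihedralGroup' n}
      add_mem' {q r} hq hr := by
        simpa only [Set.mem_ofPred_eq, phaseOp_add] using mul_mem hq hr
      zero_mem' := by simpa only [Set.mem_ofPred_eq, phaseOp_zero] using one_mem _
      neg_mem' {q} hq := by
        have : phaseOp (-q) = (phaseOp q)⁻¹ :=
          eq_inv_of_mul_eq_one_left (by rw [← phaseOp_add, neg_add_cancel, phaseOp_zero])
        simpa only [Set.mem_ofPred_eq, this] using inv_mem hq }

def permSubgroup (n : ℕ) : Subgroup (Equiv.Perm (Fin n → ZMod 2)) :=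
  (dihedralGroup' n).comap permOp

lemma comp_mem_phaseSubmodule {q : (Fin n → ZMod 2) → ZMod 8} (hq : q ∈ phaseSubmodule n)
    {σ : Equiv.Perm (Fin n → ZMod 2)} (hσ : σ ∈ permSubgroup n) : q ∘ σ ∈ phaseSubmodule n := by
  have h : phaseOp (q ∘ σ) = (permOp σ)⁻¹ * (phaseOp q * permOp σ) := by
    rw [phaseOp_mul_permOp, inv_mul_cancel_left]
  change phaseOp (q ∘ σ) ∈ dihedralGroup' n
  rw [h]
  exact mul_mem (inv_mem hσ) (mul_mem hq hσ)

def cnot (i j : Fin n) (hij : i ≠ j) : Equiv.Perm (Fin n → ZMod 2) :=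
  Function.Involutive.toPerm (fun x => Function.update x j (x i + x j)) fun x => by
    simp [Function.update_of_ne hij, ← add_assoc, CharTwo.add_self_eq_zero]

lemma cnot_apply (i j : Fin n) (hij : i ≠ j) (x : Fin n → ZMod 2) :
    cnot i j hij x = Function.update x j (x i + x j) := rfl

lemma one_mem_phaseSubmodule : 1 ∈ phaseSubmodule n :=
  Subgroup.subset_closure <| .inl <| .inl <| .inl fun x => by
    rw [phaseOp, monomialOp_e, Pi.one_apply, coe_ωPow, ZMod.val_one'' (by decide), pow_one,
      Equiv.Perm.one_apply]

def parityPhase (s : Finset (Fin n)) (x : Fin n → ZMod 2) : ZMod 8 :=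
  ((∑ k ∈ s, x k).val : ZMod 8)

lemma parityPhase_singleton_mem_phaseSubmodule (i : Fin n) : parityPhase {i} ∈ phaseSubmodule n :=
  Subgroup.subset_closure <| .inl <| .inl <| .inr ⟨i, fun x => by
    rw [phaseOp, monomialOp_e, parityPhase, Finset.sum_singleton, coe_ωPow, ZMod.val_natCast,
      Nat.mod_eq_of_lt ((x i).val_lt.trans (by norm_num)), Equiv.Perm.one_apply]⟩

lemma addLeft_single_mem_permSubgroup (i : Fin n) :
    Equiv.addLeft (Pi.single i 1) ∈ permSubgroup n :=
  Subgroup.subset_closure <| .inl <| .inr ⟨i, fun x => by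
    have : Pi.single i 1 + x = Function.update x i (x i + 1) := by
      ext k; rcases eq_or_ne k i with rfl | h <;> simp [*, add_comm]
    simp [permOp, monomialOp_e, this]⟩

lemma cnot_mem_permSubgroup (i j : Fin n) (hij : i ≠ j) : cnot i j hij ∈ permSubgroup n :=
  Subgroup.subset_closure <| .inr ⟨i, j, hij, fun x => by
    simp [permOp, monomialOp_e, cnot_apply]⟩

lemma addLeft_mem_permSubgroup (v : Fin n → ZMod 2) : Equiv.addLeft v ∈ permSubgroup n := by
  rw [← Finset.univ_sum_single v]
  refine Finset.sum_induction _ (fun w => Equiv.addLeft w ∈ permSubgroup n)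
    (fun v w hv hw => by simpa only [Equiv.addLeft_add] using mul_mem hv hw)
    (by simpa only [Equiv.addLeft_zero] using one_mem _) fun i _ => ?_
  rcases (by decide : ∀ a : ZMod 2, a = 0 ∨ a = 1) (v i) with h | h <;> rw [h]
  · simpa only [Pi.single_zero, Equiv.addLeft_zero] using one_mem _
  · exact addLeft_single_mem_permSubgroup i

lemma exists_mem_permSubgroup_eq_toMatrix_mulVec
    (t : Matrix.TransvectionStruct (Fin n) (ZMod 2)) :
    ∃ σ ∈ permSubgroup n, ⇑σ = t.toMatrix.mulVec := by
  have hmulVec : t.toMatrix.mulVec = fun x => Function.update x t.i (x t.j * t.c + x t.i) := by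
    ext x k
    rcases eq_or_ne k t.i with rfl | h <;>
      simp [Matrix.TransvectionStruct.toMatrix, Matrix.transvection, Matrix.add_mulVec,
        Matrix.single_mulVec, *, add_comm, mul_comm]
  rcases (by decide : ∀ a : ZMod 2, a = 0 ∨ a = 1) t.c with h | h
  · exact ⟨1, one_mem _, funext fun x => by simp [hmulVec, h]⟩
  · exact ⟨cnot t.j t.i t.hij.symm, cnot_mem_permSubgroup _ _ _, funext fun x => by
      simp [hmulVec, h, cnot_apply]⟩

lemma exists_mem_permSubgroup_eq_mulVec (M : Matrix (Fin n) (Fin n) (ZMod 2)) (hM : M.det ≠ 0) :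
    ∃ σ ∈ permSubgroup n, ⇑σ = M.mulVec := by
  refine Matrix.diagonal_transvection_induction_of_det_ne_zero
    (fun N => ∃ σ ∈ permSubgroup n, ⇑σ = N.mulVec) M hM (fun D hD => ?_)
    exists_mem_permSubgroup_eq_toMatrix_mulVec fun A B _ _ ⟨σ, hσ, hσA⟩ ⟨τ, hτ, hτB⟩ => ?_
  · have hD1 : D = 1 := funext fun i =>
      (by decide : ∀ a : ZMod 2, a ≠ 0 → a = 1) _ fun h0 =>
        hD (by rw [Matrix.det_diagonal]; exact Finset.prod_eq_zero (Finset.mem_univ i) h0)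
    exact ⟨1, one_mem _, funext fun x => by simp [hD1]⟩
  · refine ⟨σ * τ, mul_mem hσ hτ, funext fun x => ?_⟩
    simp [hσA, hτB, Matrix.mulVec_mulVec]

lemma linearEquiv_mem_permSubgroup (l : (Fin n → ZMod 2) ≃ₗ[ZMod 2] (Fin n → ZMod 2)) :
    l.toEquiv ∈ permSubgroup n := by
  have hdet : (LinearMap.toMatrix' (l : (Fin n → ZMod 2) →ₗ[ZMod 2] _)).det ≠ 0 := by
    rw [LinearMap.det_toMatrix']
    exact l.isUnit_det'.ne_zero
  obtain ⟨σ, hσ, hσl⟩ := exists_mem_permSubgroup_eq_mulVec _ hdet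
  convert hσ
  ext x : 1
  simp [hσl]

lemma affineEquiv_mem_permSubgroup (f : (Fin n → ZMod 2) ≃ᵃ[ZMod 2] (Fin n → ZMod 2)) :
    f.toEquiv ∈ permSubgroup n := by
  have hf : f.toEquiv = Equiv.addLeft (f 0) * f.linear.toEquiv := by
    ext x : 1
    simpa [add_comm] using f.map_vadd 0 x
  rw [hf]
  exact mul_mem (addLeft_mem_permSubgroup _) (linearEquiv_mem_permSubgroup _)

lemma parityPhase_mem_phaseSubmodule (s : Finset (Fin n)) :
    parityPhase s ∈ phaseSubmodule n := by
  induction s using Finset.induction_on with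
  | empty => exact zero_mem _
  | insert j s hj ih =>
    rcases s.eq_empty_or_nonempty with rfl | ⟨i, hi⟩
    · exact parityPhase_singleton_mem_phaseSubmodule j
    · have hji : j ≠ i := fun h => hj (h ▸ hi)
      -- a CNOT with control `j` and target `i ∈ s` adds `x j` to the parity over `s`
      convert comp_mem_phaseSubmodule ih (cnot_mem_permSubgroup j i hji) using 1
      funext x
      rw [Function.comp_apply, parityPhase, parityPhase, cnot_apply, Finset.sum_update_of_mem hi,
        Finset.sum_insert hj, Finset.sum_eq_add_sum_sdiff_singleton_of_mem hi, add_assoc]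

lemma pnf_eq (a₀ : ZMod 8) (a : Fin n → ZMod 8) (b : Pair n → ZMod 4) (c : Triple n → ZMod 2) :
    pnf a₀ a b c = a₀ • 1 + ∑ i, a i • parityPhase {i}
      + ∑ p : Pair n, ((b p).val : ZMod 8) • parityPhase {p.1.1, p.1.2}
      + ∑ t : Triple n, ((c t).val : ZMod 8) • parityPhase {t.1.1, t.1.2.1, t.1.2.2} := by
  funext x
  have hpair (p : Pair n) : ∑ k ∈ {p.1.1, p.1.2}, x k = x p.1.1 + x p.1.2 :=
    Finset.sum_pair p.2.ne
  have htriple (t : Triple n) :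
      ∑ k ∈ {t.1.1, t.1.2.1, t.1.2.2}, x k = x t.1.1 + x t.1.2.1 + x t.1.2.2 := by
    rw [Finset.sum_insert (by simp [t.2.1.ne, (t.2.1.trans t.2.2).ne]), Finset.sum_pair t.2.2.ne,
      add_assoc]
  simp only [pnf, parityPhase, Pi.add_apply, Finset.sum_apply, Pi.smul_apply, smul_eq_mul,
    Pi.one_apply, mul_one, Finset.sum_singleton, hpair, htriple]

lemma pnf_mem_phaseSubmodule (a₀ : ZMod 8) (a : Fin n → ZMod 8) (b : Pair n → ZMod 4)
    (c : Triple n → ZMod 2) : pnf a₀ a b c ∈ phaseSubmodule n := by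
  rw [pnf_eq]
  refine add_mem (add_mem (add_mem ?_ ?_) ?_) ?_
  · exact Submodule.smul_mem _ _ one_mem_phaseSubmodule
  · exact sum_mem fun i _ => Submodule.smul_mem _ _ (parityPhase_singleton_mem_phaseSubmodule i)
  · exact sum_mem fun p _ => Submodule.smul_mem _ _ (parityPhase_mem_phaseSubmodule _)
  · exact sum_mem fun t _ => Submodule.smul_mem _ _ (parityPhase_mem_phaseSubmodule _)

lemma mem_dihedralGroup'_of_apply_e {W : LinearMap.GeneralLinearGroup ℂ (QState n)}
    {q : (Fin n → ZMod 2) → ZMod 8} (hq : q ∈ phaseSubmodule n)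
    {σ : Equiv.Perm (Fin n → ZMod 2)} (hσ : σ ∈ permSubgroup n)
    (hW : ∀ x, W.val (e x) = ω ^ (q x).val • e (σ x)) : W ∈ dihedralGroup' n := by
  have hW' : W = permOp σ * phaseOp q := generalLinearGroup_ext_e fun x => by
    simp [hW, permOp, phaseOp, monomialOp_mul, monomialOp_e, coe_ωPow]
  rw [hW']
  exact mul_mem hσ hq

end CNOTDihedral

theorem stmt9 {n : ℕ} (W : LinearMap.GeneralLinearGroup ℂ (QState n))
    (a₀ : ZMod 8) (a : Fin n → ZMod 8) (b : Pair n → ZMod 4) (c : Triple n → ZMod 2)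
    (p : (Fin n → ZMod 2) → ZMod 8) (hp : ∀ x, p x = pnf a₀ a b c x)
    (f : (Fin n → ZMod 2) ≃ᵃ[ZMod 2] (Fin n → ZMod 2))
    (hW : ∀ x : Fin n → ZMod 2, W.val (e x) = ω ^ (p x).val • e (f x)) :
    W ∈ dihedralGroup' n := by
  have hpnf : p ∈ phaseSubmodule n := funext hp ▸ pnf_mem_phaseSubmodule a₀ a b c
  exact mem_dihedralGroup'_of_apply_e hpnf (affineEquiv_mem_permSubgroup f) hW
end
end

section
/- Fix n : ℕ and let ω = exp(πi/4) ∈ ℂ. Suppose p and p' are phase normal forms on (Fin n → ZMod 2) with data (a₀,a,b,c) and (a₀',a',b',c') respectively, and f, f' are bijective affine maps of (Fin n → ZMod 2) over ZMod 2. If the operators W and W' on ℂ^{(Fin n → ZMod 2)} defined by W e_x = ω^{(p x).val} • e_{f x} and W' e_x = ω^{(p' x).val} • e_{f' x} are equal, then f = f', a₀ = a₀', a = a', b = b', and c = c'. -/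
open scoped BigOperators

noncomputable section

lemma omega_pow_inj (s t : ZMod 8) (h : ω ^ s.val = ω ^ t.val) : s = t := by
  rw [ω, ← Complex.exp_nat_mul, ← Complex.exp_nat_mul, Complex.exp_eq_exp_iff_exists_int] at h
  obtain ⟨m, hm⟩ := h
  have hπ : (Real.pi : ℂ) ≠ 0 := by simpa using Real.pi_ne_zero
  have h4 : (Real.pi : ℂ) * Complex.I / 4 ≠ 0 := by
    apply div_ne_zero (mul_ne_zero hπ Complex.I_ne_zero); norm_num
  have key : ((s.val : ℂ) - (t.val : ℂ) - 8 * m) * (Real.pi * Complex.I / 4) = 0 := by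
    linear_combination hm
  have hcc : ((s.val : ℂ)) = (t.val : ℂ) + 8 * m := by
    rcases mul_eq_zero.mp key with h0 | h0
    · linear_combination h0
    · exact absurd h0 h4
  have hz : (s.val : ℤ) = (t.val : ℤ) + 8 * m := by exact_mod_cast hcc
  have h8 : ((s.val : ℤ) : ZMod 8) = ((t.val : ℤ) : ZMod 8) := by
    rw [hz]; push_cast
    rw [show ((8:ZMod 8)) = 0 by decide]; ring
  simpa [ZMod.natCast_val, ZMod.intCast_cast] using h8

lemma val4_inj : ∀ u v : ZMod 2, 4 * (u.val : ZMod 8) = 4 * (v.val : ZMod 8) → u = v := by decide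

lemma val2_inj : ∀ u v : ZMod 4, 2 * (u.val : ZMod 8) = 2 * (v.val : ZMod 8) → u = v := by decide

lemma single_one_eq {n : ℕ} {i m : Fin n} (h : (Pi.single i 1 : Fin n → ZMod 2) m = 1) : m = i := by
  by_contra hh
  rw [Pi.single_eq_of_ne hh] at h
  exact absurd h (by decide)

lemma ind2 {n : ℕ} {i m1 m2 : Fin n}
    (h : (Pi.single i 1 : Fin n → ZMod 2) m1 + (Pi.single i 1 : Fin n → ZMod 2) m2 = 1) :
    m1 = i ∨ m2 = i := by
  by_contra hc
  push_neg at hc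
  rw [Pi.single_eq_of_ne hc.1, Pi.single_eq_of_ne hc.2] at h
  exact absurd h (by decide)

lemma ind3 {n : ℕ} {i m1 m2 m3 : Fin n}
    (h : (Pi.single i 1 : Fin n → ZMod 2) m1 + (Pi.single i 1 : Fin n → ZMod 2) m2
        + (Pi.single i 1 : Fin n → ZMod 2) m3 = 1) :
    m1 = i ∨ m2 = i ∨ m3 = i := by
  by_contra hc
  push_neg at hc
  rw [Pi.single_eq_of_ne hc.1, Pi.single_eq_of_ne hc.2.1, Pi.single_eq_of_ne hc.2.2] at h
  exact absurd h (by decide)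

lemma pair_iff {n : ℕ} (p : Pair n) {i j : Fin n} (hij : i < j) :
    p = ⟨(i,j), hij⟩ ↔
      ((Pi.single i 1 : Fin n → ZMod 2) p.val.1 + (Pi.single i 1 : Fin n → ZMod 2) p.val.2 = 1
        ∧ (Pi.single j 1 : Fin n → ZMod 2) p.val.1 + (Pi.single j 1 : Fin n → ZMod 2) p.val.2 = 1) := by
  constructor
  · rintro rfl
    simp [Pi.single_eq_same, Pi.single_eq_of_ne hij.ne, Pi.single_eq_of_ne hij.ne']
  · rintro ⟨hu, hv⟩
    obtain ⟨⟨p1, p2⟩, hp⟩ := p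
    have h1 := ind2 hu
    have h2 := ind2 hv
    dsimp only at h1 h2 hp
    have hp' := Fin.lt_def.mp hp
    have hij' := Fin.lt_def.mp hij
    simp only [← Fin.val_inj] at h1 h2
    apply Subtype.ext
    rw [Prod.mk.injEq]
    constructor <;> (rw [← Fin.val_inj]; omega)

lemma triple_iff {n : ℕ} (t : Triple n) {i j k : Fin n} (hij : i < j) (hjk : j < k) :
    t = ⟨(i,j,k), hij, hjk⟩ ↔
      ((Pi.single i 1 : Fin n → ZMod 2) t.val.1 + (Pi.single i 1 : Fin n → ZMod 2) t.val.2.1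
          + (Pi.single i 1 : Fin n → ZMod 2) t.val.2.2 = 1
        ∧ (Pi.single j 1 : Fin n → ZMod 2) t.val.1 + (Pi.single j 1 : Fin n → ZMod 2) t.val.2.1
          + (Pi.single j 1 : Fin n → ZMod 2) t.val.2.2 = 1
        ∧ (Pi.single k 1 : Fin n → ZMod 2) t.val.1 + (Pi.single k 1 : Fin n → ZMod 2) t.val.2.1
          + (Pi.single k 1 : Fin n → ZMod 2) t.val.2.2 = 1) := by
  have hik := hij.trans hjk
  constructor
  · rintro rfl
    simp [Pi.single_eq_same, Pi.single_eq_of_ne hij.ne, Pi.single_eq_of_ne hij.ne',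
      Pi.single_eq_of_ne hjk.ne, Pi.single_eq_of_ne hjk.ne',
      Pi.single_eq_of_ne hik.ne, Pi.single_eq_of_ne hik.ne']
  · rintro ⟨hu, hv, hw⟩
    obtain ⟨⟨t1, t2, t3⟩, ht⟩ := t
    obtain ⟨ht1, ht2⟩ := ht
    have h1 := ind3 hu
    have h2 := ind3 hv
    have h3 := ind3 hw
    dsimp only at h1 h2 h3 ht1 ht2
    have hp1 := Fin.lt_def.mp ht1
    have hp2 := Fin.lt_def.mp ht2
    have hij' := Fin.lt_def.mp hij
    have hjk' := Fin.lt_def.mp hjk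
    simp only [← Fin.val_inj] at h1 h2 h3
    apply Subtype.ext
    rw [Prod.mk.injEq, Prod.mk.injEq]
    refine ⟨?_, ?_, ?_⟩ <;> (rw [← Fin.val_inj]; omega)

lemma pnf_zero {n : ℕ} (a₀ : ZMod 8) (a : Fin n → ZMod 8) (b : Pair n → ZMod 4)
    (c : Triple n → ZMod 2) : pnf a₀ a b c 0 = a₀ := by
  simp [pnf]

lemma F1 {n : ℕ} (a₀ : ZMod 8) (a : Fin n → ZMod 8) (b : Pair n → ZMod 4)
    (c : Triple n → ZMod 2) (i0 : Fin n) :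
    pnf a₀ a b c (Pi.single i0 1) = pnf a₀ a b c 0 + a i0
      + ∑ p : Pair n, (if (Pi.single i0 1 : Fin n → ZMod 2) p.val.1
            + (Pi.single i0 1 : Fin n → ZMod 2) p.val.2 = 1
          then ((b p).val : ZMod 8) else 0)
      + ∑ t : Triple n, (if (Pi.single i0 1 : Fin n → ZMod 2) t.val.1
            + (Pi.single i0 1 : Fin n → ZMod 2) t.val.2.1
            + (Pi.single i0 1 : Fin n → ZMod 2) t.val.2.2 = 1
          then ((c t).val : ZMod 8) else 0) := by
  simp only [pnf]
  have e1 : ∑ m : Fin n, a m * (((Pi.single i0 1 : Fin n → ZMod 2) m).val : ZMod 8)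
      = (∑ m : Fin n, a m * (((0 : Fin n → ZMod 2) m).val : ZMod 8)) + a i0 := by
    have ha : a i0 = ∑ m : Fin n, if m = i0 then a m else 0 := by
      rw [Finset.sum_ite_eq' Finset.univ i0 a]; simp
    rw [ha, ← Finset.sum_add_distrib]
    refine Finset.sum_congr rfl fun m _ => ?_
    have hiff : (m = i0) ↔ ((Pi.single i0 1 : Fin n → ZMod 2) m = 1) := by
      constructor
      · rintro rfl; simp
      · exact single_one_eq
    simp only [hiff, Pi.zero_apply]
    generalize (Pi.single i0 1 : Fin n → ZMod 2) m = u
    revert u; generalize a m = B; revert B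
    decide
  have e2 : ∑ p : Pair n, ((b p).val : ZMod 8)
        * (((Pi.single i0 1 : Fin n → ZMod 2) p.val.1
            + (Pi.single i0 1 : Fin n → ZMod 2) p.val.2).val : ZMod 8)
      = (∑ p : Pair n, ((b p).val : ZMod 8)
          * (((0 : Fin n → ZMod 2) p.val.1 + (0 : Fin n → ZMod 2) p.val.2).val : ZMod 8))
        + ∑ p : Pair n, (if (Pi.single i0 1 : Fin n → ZMod 2) p.val.1
              + (Pi.single i0 1 : Fin n → ZMod 2) p.val.2 = 1
            then ((b p).val : ZMod 8) else 0) := by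
    rw [← Finset.sum_add_distrib]
    refine Finset.sum_congr rfl fun p _ => ?_
    simp only [Pi.zero_apply]
    generalize (Pi.single i0 1 : Fin n → ZMod 2) p.val.1 = u
    generalize (Pi.single i0 1 : Fin n → ZMod 2) p.val.2 = v
    revert u v; generalize b p = B; revert B
    decide
  have e3 : ∑ t : Triple n, ((c t).val : ZMod 8)
        * (((Pi.single i0 1 : Fin n → ZMod 2) t.val.1
            + (Pi.single i0 1 : Fin n → ZMod 2) t.val.2.1
            + (Pi.single i0 1 : Fin n → ZMod 2) t.val.2.2).val : ZMod 8)
      = (∑ t : Triple n, ((c t).val : ZMod 8)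
          * (((0 : Fin n → ZMod 2) t.val.1 + (0 : Fin n → ZMod 2) t.val.2.1
              + (0 : Fin n → ZMod 2) t.val.2.2).val : ZMod 8))
        + ∑ t : Triple n, (if (Pi.single i0 1 : Fin n → ZMod 2) t.val.1
              + (Pi.single i0 1 : Fin n → ZMod 2) t.val.2.1
              + (Pi.single i0 1 : Fin n → ZMod 2) t.val.2.2 = 1
            then ((c t).val : ZMod 8) else 0) := by
    rw [← Finset.sum_add_distrib]
    refine Finset.sum_congr rfl fun t _ => ?_
    simp only [Pi.zero_apply]
    generalize (Pi.single i0 1 : Fin n → ZMod 2) t.val.1 = u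
    generalize (Pi.single i0 1 : Fin n → ZMod 2) t.val.2.1 = v
    generalize (Pi.single i0 1 : Fin n → ZMod 2) t.val.2.2 = w
    revert u v w; generalize c t = C; revert C
    decide
  linear_combination e1 + e2 + e3

lemma F2 {n : ℕ} (a₀ : ZMod 8) (a : Fin n → ZMod 8) (b : Pair n → ZMod 4)
    (c : Triple n → ZMod 2) (i j : Fin n) (hij : i < j) :
    pnf a₀ a b c (Pi.single i 1) + pnf a₀ a b c (Pi.single j 1)
      = pnf a₀ a b c (Pi.single i 1 + Pi.single j 1) + pnf a₀ a b c 0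
        + 2 * ((b ⟨(i,j), hij⟩).val : ZMod 8)
        + ∑ t : Triple n, (if ((Pi.single i 1 : Fin n → ZMod 2) t.val.1
              + (Pi.single i 1 : Fin n → ZMod 2) t.val.2.1
              + (Pi.single i 1 : Fin n → ZMod 2) t.val.2.2 = 1
            ∧ (Pi.single j 1 : Fin n → ZMod 2) t.val.1
              + (Pi.single j 1 : Fin n → ZMod 2) t.val.2.1
              + (Pi.single j 1 : Fin n → ZMod 2) t.val.2.2 = 1)
          then 2 * ((c t).val : ZMod 8) else 0) := by
  simp only [pnf]
  have hb : 2 * ((b ⟨(i,j), hij⟩).val : ZMod 8)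
      = ∑ p : Pair n, if p = ⟨(i,j), hij⟩ then 2 * ((b p).val : ZMod 8) else 0 := by
    rw [Finset.sum_ite_eq' Finset.univ (⟨(i,j), hij⟩ : Pair n)
      (fun p => 2 * ((b p).val : ZMod 8))]
    simp
  have e1 : (∑ m : Fin n, a m * (((Pi.single i 1 : Fin n → ZMod 2) m).val : ZMod 8))
        + ∑ m : Fin n, a m * (((Pi.single j 1 : Fin n → ZMod 2) m).val : ZMod 8)
      = (∑ m : Fin n, a m * ((((Pi.single i 1 + Pi.single j 1) : Fin n → ZMod 2) m).val : ZMod 8))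
        + ∑ m : Fin n, a m * (((0 : Fin n → ZMod 2) m).val : ZMod 8) := by
    simp only [← Finset.sum_add_distrib]
    refine Finset.sum_congr rfl fun m _ => ?_
    have hcon : ¬((Pi.single i 1 : Fin n → ZMod 2) m = 1
        ∧ (Pi.single j 1 : Fin n → ZMod 2) m = 1) := by
      rintro ⟨h1, h2⟩
      exact hij.ne ((single_one_eq h1).symm.trans (single_one_eq h2))
    revert hcon
    simp only [Pi.add_apply, Pi.zero_apply]
    generalize (Pi.single i 1 : Fin n → ZMod 2) m = u
    generalize (Pi.single j 1 : Fin n → ZMod 2) m = v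
    revert u v; generalize a m = B; revert B
    decide
  have e2 : (∑ p : Pair n, ((b p).val : ZMod 8)
          * (((Pi.single i 1 : Fin n → ZMod 2) p.val.1
              + (Pi.single i 1 : Fin n → ZMod 2) p.val.2).val : ZMod 8))
        + ∑ p : Pair n, ((b p).val : ZMod 8)
          * (((Pi.single j 1 : Fin n → ZMod 2) p.val.1
              + (Pi.single j 1 : Fin n → ZMod 2) p.val.2).val : ZMod 8)
      = (∑ p : Pair n, ((b p).val : ZMod 8)
          * ((((Pi.single i 1 + Pi.single j 1) : Fin n → ZMod 2) p.val.1
              + ((Pi.single i 1 + Pi.single j 1) : Fin n → ZMod 2) p.val.2).val : ZMod 8))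
        + (∑ p : Pair n, ((b p).val : ZMod 8)
          * (((0 : Fin n → ZMod 2) p.val.1 + (0 : Fin n → ZMod 2) p.val.2).val : ZMod 8))
        + ∑ p : Pair n, (if p = ⟨(i,j), hij⟩ then 2 * ((b p).val : ZMod 8) else 0) := by
    simp only [← Finset.sum_add_distrib]
    refine Finset.sum_congr rfl fun p _ => ?_
    simp only [pair_iff p hij, Pi.add_apply, Pi.zero_apply]
    generalize (Pi.single i 1 : Fin n → ZMod 2) p.val.1 = u1
    generalize (Pi.single i 1 : Fin n → ZMod 2) p.val.2 = u2
    generalize (Pi.single j 1 : Fin n → ZMod 2) p.val.1 = v1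
    generalize (Pi.single j 1 : Fin n → ZMod 2) p.val.2 = v2
    revert u1 u2 v1 v2; generalize b p = B; revert B
    decide
  have e3 : (∑ t : Triple n, ((c t).val : ZMod 8)
          * (((Pi.single i 1 : Fin n → ZMod 2) t.val.1
              + (Pi.single i 1 : Fin n → ZMod 2) t.val.2.1
              + (Pi.single i 1 : Fin n → ZMod 2) t.val.2.2).val : ZMod 8))
        + ∑ t : Triple n, ((c t).val : ZMod 8)
          * (((Pi.single j 1 : Fin n → ZMod 2) t.val.1
              + (Pi.single j 1 : Fin n → ZMod 2) t.val.2.1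
              + (Pi.single j 1 : Fin n → ZMod 2) t.val.2.2).val : ZMod 8)
      = (∑ t : Triple n, ((c t).val : ZMod 8)
          * ((((Pi.single i 1 + Pi.single j 1) : Fin n → ZMod 2) t.val.1
              + ((Pi.single i 1 + Pi.single j 1) : Fin n → ZMod 2) t.val.2.1
              + ((Pi.single i 1 + Pi.single j 1) : Fin n → ZMod 2) t.val.2.2).val : ZMod 8))
        + (∑ t : Triple n, ((c t).val : ZMod 8)
          * (((0 : Fin n → ZMod 2) t.val.1 + (0 : Fin n → ZMod 2) t.val.2.1
              + (0 : Fin n → ZMod 2) t.val.2.2).val : ZMod 8))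
        + ∑ t : Triple n, (if ((Pi.single i 1 : Fin n → ZMod 2) t.val.1
              + (Pi.single i 1 : Fin n → ZMod 2) t.val.2.1
              + (Pi.single i 1 : Fin n → ZMod 2) t.val.2.2 = 1
            ∧ (Pi.single j 1 : Fin n → ZMod 2) t.val.1
              + (Pi.single j 1 : Fin n → ZMod 2) t.val.2.1
              + (Pi.single j 1 : Fin n → ZMod 2) t.val.2.2 = 1)
          then 2 * ((c t).val : ZMod 8) else 0) := by
    simp only [← Finset.sum_add_distrib]
    refine Finset.sum_congr rfl fun t _ => ?_
    simp only [Pi.add_apply, Pi.zero_apply]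
    generalize (Pi.single i 1 : Fin n → ZMod 2) t.val.1 = u1
    generalize (Pi.single i 1 : Fin n → ZMod 2) t.val.2.1 = u2
    generalize (Pi.single i 1 : Fin n → ZMod 2) t.val.2.2 = u3
    generalize (Pi.single j 1 : Fin n → ZMod 2) t.val.1 = v1
    generalize (Pi.single j 1 : Fin n → ZMod 2) t.val.2.1 = v2
    generalize (Pi.single j 1 : Fin n → ZMod 2) t.val.2.2 = v3
    revert u1 u2 u3 v1 v2 v3; generalize c t = C; revert C
    decide
  linear_combination e1 + e2 + e3 - hb

set_option maxHeartbeats 2000000 in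
lemma F3 {n : ℕ} (a₀ : ZMod 8) (a : Fin n → ZMod 8) (b : Pair n → ZMod 4)
    (c : Triple n → ZMod 2) (i j k : Fin n) (hij : i < j) (hjk : j < k) :
    pnf a₀ a b c (Pi.single i 1) + pnf a₀ a b c (Pi.single j 1) + pnf a₀ a b c (Pi.single k 1)
        + pnf a₀ a b c (Pi.single i 1 + Pi.single j 1 + Pi.single k 1)
      = pnf a₀ a b c (Pi.single i 1 + Pi.single j 1)
        + pnf a₀ a b c (Pi.single i 1 + Pi.single k 1)
        + pnf a₀ a b c (Pi.single j 1 + Pi.single k 1)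
        + pnf a₀ a b c 0
        + 4 * ((c ⟨(i,j,k), hij, hjk⟩).val : ZMod 8) := by
  simp only [pnf]
  have hc : 4 * ((c ⟨(i,j,k), hij, hjk⟩).val : ZMod 8)
      = ∑ t : Triple n, if t = ⟨(i,j,k), hij, hjk⟩ then 4 * ((c t).val : ZMod 8) else 0 := by
    rw [Finset.sum_ite_eq' Finset.univ (⟨(i,j,k), hij, hjk⟩ : Triple n)
      (fun t => 4 * ((c t).val : ZMod 8))]
    simp
  have e1 : (∑ m : Fin n, a m * (((Pi.single i 1 : Fin n → ZMod 2) m).val : ZMod 8))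
        + (∑ m : Fin n, a m * (((Pi.single j 1 : Fin n → ZMod 2) m).val : ZMod 8))
        + (∑ m : Fin n, a m * (((Pi.single k 1 : Fin n → ZMod 2) m).val : ZMod 8))
        + ∑ m : Fin n, a m
          * ((((Pi.single i 1 + Pi.single j 1 + Pi.single k 1) : Fin n → ZMod 2) m).val : ZMod 8)
      = (∑ m : Fin n, a m * ((((Pi.single i 1 + Pi.single j 1) : Fin n → ZMod 2) m).val : ZMod 8))
        + (∑ m : Fin n, a m * ((((Pi.single i 1 + Pi.single k 1) : Fin n → ZMod 2) m).val : ZMod 8))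
        + (∑ m : Fin n, a m * ((((Pi.single j 1 + Pi.single k 1) : Fin n → ZMod 2) m).val : ZMod 8))
        + ∑ m : Fin n, a m * (((0 : Fin n → ZMod 2) m).val : ZMod 8) := by
    simp only [← Finset.sum_add_distrib]
    refine Finset.sum_congr rfl fun m _ => ?_
    have hcon : ¬((Pi.single i 1 : Fin n → ZMod 2) m = 1
        ∧ (Pi.single j 1 : Fin n → ZMod 2) m = 1
        ∧ (Pi.single k 1 : Fin n → ZMod 2) m = 1) := by
      rintro ⟨h1, h2, _⟩
      exact hij.ne ((single_one_eq h1).symm.trans (single_one_eq h2))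
    revert hcon
    simp only [Pi.add_apply, Pi.zero_apply]
    generalize (Pi.single i 1 : Fin n → ZMod 2) m = u
    generalize (Pi.single j 1 : Fin n → ZMod 2) m = v
    generalize (Pi.single k 1 : Fin n → ZMod 2) m = w
    revert u v w; generalize a m = B; revert B
    decide
  have e2 : (∑ p : Pair n, ((b p).val : ZMod 8)
          * (((Pi.single i 1 : Fin n → ZMod 2) p.val.1
              + (Pi.single i 1 : Fin n → ZMod 2) p.val.2).val : ZMod 8))
        + (∑ p : Pair n, ((b p).val : ZMod 8)
          * (((Pi.single j 1 : Fin n → ZMod 2) p.val.1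
              + (Pi.single j 1 : Fin n → ZMod 2) p.val.2).val : ZMod 8))
        + (∑ p : Pair n, ((b p).val : ZMod 8)
          * (((Pi.single k 1 : Fin n → ZMod 2) p.val.1
              + (Pi.single k 1 : Fin n → ZMod 2) p.val.2).val : ZMod 8))
        + ∑ p : Pair n, ((b p).val : ZMod 8)
          * ((((Pi.single i 1 + Pi.single j 1 + Pi.single k 1) : Fin n → ZMod 2) p.val.1
              + ((Pi.single i 1 + Pi.single j 1 + Pi.single k 1) : Fin n → ZMod 2) p.val.2).val
            : ZMod 8)
      = (∑ p : Pair n, ((b p).val : ZMod 8)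
          * ((((Pi.single i 1 + Pi.single j 1) : Fin n → ZMod 2) p.val.1
              + ((Pi.single i 1 + Pi.single j 1) : Fin n → ZMod 2) p.val.2).val : ZMod 8))
        + (∑ p : Pair n, ((b p).val : ZMod 8)
          * ((((Pi.single i 1 + Pi.single k 1) : Fin n → ZMod 2) p.val.1
              + ((Pi.single i 1 + Pi.single k 1) : Fin n → ZMod 2) p.val.2).val : ZMod 8))
        + (∑ p : Pair n, ((b p).val : ZMod 8)
          * ((((Pi.single j 1 + Pi.single k 1) : Fin n → ZMod 2) p.val.1
              + ((Pi.single j 1 + Pi.single k 1) : Fin n → ZMod 2) p.val.2).val : ZMod 8))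
        + ∑ p : Pair n, ((b p).val : ZMod 8)
          * (((0 : Fin n → ZMod 2) p.val.1 + (0 : Fin n → ZMod 2) p.val.2).val : ZMod 8) := by
    simp only [← Finset.sum_add_distrib]
    refine Finset.sum_congr rfl fun p _ => ?_
    have hcon : ¬((Pi.single i 1 : Fin n → ZMod 2) p.val.1
          + (Pi.single i 1 : Fin n → ZMod 2) p.val.2 = 1
        ∧ (Pi.single j 1 : Fin n → ZMod 2) p.val.1
          + (Pi.single j 1 : Fin n → ZMod 2) p.val.2 = 1
        ∧ (Pi.single k 1 : Fin n → ZMod 2) p.val.1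
          + (Pi.single k 1 : Fin n → ZMod 2) p.val.2 = 1) := by
      rintro ⟨hu, hv, hw⟩
      have h1 := ind2 hu
      have h2 := ind2 hv
      have h3 := ind2 hw
      have hij' := Fin.lt_def.mp hij
      have hjk' := Fin.lt_def.mp hjk
      simp only [← Fin.val_inj] at h1 h2 h3
      omega
    revert hcon
    simp only [Pi.add_apply, Pi.zero_apply]
    generalize (Pi.single i 1 : Fin n → ZMod 2) p.val.1 = u1
    generalize (Pi.single i 1 : Fin n → ZMod 2) p.val.2 = u2
    generalize (Pi.single j 1 : Fin n → ZMod 2) p.val.1 = v1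
    generalize (Pi.single j 1 : Fin n → ZMod 2) p.val.2 = v2
    generalize (Pi.single k 1 : Fin n → ZMod 2) p.val.1 = w1
    generalize (Pi.single k 1 : Fin n → ZMod 2) p.val.2 = w2
    revert u1 u2 v1 v2 w1 w2; generalize b p = B; revert B
    decide
  have e3 : (∑ t : Triple n, ((c t).val : ZMod 8)
          * (((Pi.single i 1 : Fin n → ZMod 2) t.val.1
              + (Pi.single i 1 : Fin n → ZMod 2) t.val.2.1
              + (Pi.single i 1 : Fin n → ZMod 2) t.val.2.2).val : ZMod 8))
        + (∑ t : Triple n, ((c t).val : ZMod 8)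
          * (((Pi.single j 1 : Fin n → ZMod 2) t.val.1
              + (Pi.single j 1 : Fin n → ZMod 2) t.val.2.1
              + (Pi.single j 1 : Fin n → ZMod 2) t.val.2.2).val : ZMod 8))
        + (∑ t : Triple n, ((c t).val : ZMod 8)
          * (((Pi.single k 1 : Fin n → ZMod 2) t.val.1
              + (Pi.single k 1 : Fin n → ZMod 2) t.val.2.1
              + (Pi.single k 1 : Fin n → ZMod 2) t.val.2.2).val : ZMod 8))
        + ∑ t : Triple n, ((c t).val : ZMod 8)
          * ((((Pi.single i 1 + Pi.single j 1 + Pi.single k 1) : Fin n → ZMod 2) t.val.1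
              + ((Pi.single i 1 + Pi.single j 1 + Pi.single k 1) : Fin n → ZMod 2) t.val.2.1
              + ((Pi.single i 1 + Pi.single j 1 + Pi.single k 1) : Fin n → ZMod 2) t.val.2.2).val
            : ZMod 8)
      = (∑ t : Triple n, ((c t).val : ZMod 8)
          * ((((Pi.single i 1 + Pi.single j 1) : Fin n → ZMod 2) t.val.1
              + ((Pi.single i 1 + Pi.single j 1) : Fin n → ZMod 2) t.val.2.1
              + ((Pi.single i 1 + Pi.single j 1) : Fin n → ZMod 2) t.val.2.2).val : ZMod 8))
        + (∑ t : Triple n, ((c t).val : ZMod 8)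
          * ((((Pi.single i 1 + Pi.single k 1) : Fin n → ZMod 2) t.val.1
              + ((Pi.single i 1 + Pi.single k 1) : Fin n → ZMod 2) t.val.2.1
              + ((Pi.single i 1 + Pi.single k 1) : Fin n → ZMod 2) t.val.2.2).val : ZMod 8))
        + (∑ t : Triple n, ((c t).val : ZMod 8)
          * ((((Pi.single j 1 + Pi.single k 1) : Fin n → ZMod 2) t.val.1
              + ((Pi.single j 1 + Pi.single k 1) : Fin n → ZMod 2) t.val.2.1
              + ((Pi.single j 1 + Pi.single k 1) : Fin n → ZMod 2) t.val.2.2).val : ZMod 8))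
        + (∑ t : Triple n, ((c t).val : ZMod 8)
          * (((0 : Fin n → ZMod 2) t.val.1 + (0 : Fin n → ZMod 2) t.val.2.1
              + (0 : Fin n → ZMod 2) t.val.2.2).val : ZMod 8))
        + ∑ t : Triple n, (if t = ⟨(i,j,k), hij, hjk⟩ then 4 * ((c t).val : ZMod 8) else 0) := by
    simp only [← Finset.sum_add_distrib]
    refine Finset.sum_congr rfl fun t _ => ?_
    simp only [triple_iff t hij hjk, Pi.add_apply, Pi.zero_apply]
    generalize (Pi.single i 1 : Fin n → ZMod 2) t.val.1 = u1
    generalize (Pi.single i 1 : Fin n → ZMod 2) t.val.2.1 = u2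
    generalize (Pi.single i 1 : Fin n → ZMod 2) t.val.2.2 = u3
    generalize (Pi.single j 1 : Fin n → ZMod 2) t.val.1 = v1
    generalize (Pi.single j 1 : Fin n → ZMod 2) t.val.2.1 = v2
    generalize (Pi.single j 1 : Fin n → ZMod 2) t.val.2.2 = v3
    generalize (Pi.single k 1 : Fin n → ZMod 2) t.val.1 = w1
    generalize (Pi.single k 1 : Fin n → ZMod 2) t.val.2.1 = w2
    generalize (Pi.single k 1 : Fin n → ZMod 2) t.val.2.2 = w3
    revert u1 u2 u3 v1 v2 v3 w1 w2 w3; generalize c t = C; revert C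
    decide
  linear_combination e1 + e2 + e3 - hc

theorem stmt10 {n : ℕ}
    (a₀ : ZMod 8) (a : Fin n → ZMod 8) (b : Pair n → ZMod 4) (c : Triple n → ZMod 2)
    (a₀' : ZMod 8) (a' : Fin n → ZMod 8) (b' : Pair n → ZMod 4) (c' : Triple n → ZMod 2)
    (f f' : (Fin n → ZMod 2) ≃ᵃ[ZMod 2] (Fin n → ZMod 2))
    (W W' : Module.End ℂ (QState n))
    (hW : ∀ x : Fin n → ZMod 2, W (e x) = ω ^ (pnf a₀ a b c x).val • e (f x))
    (hW' : ∀ x : Fin n → ZMod 2, W' (e x) = ω ^ (pnf a₀' a' b' c' x).val • e (f' x))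
    (h : W = W') :
    f = f' ∧ a₀ = a₀' ∧ a = a' ∧ b = b' ∧ c = c' := by
  have hω0 : (ω : ℂ) ≠ 0 := by rw [ω]; exact Complex.exp_ne_zero _
  have key : ∀ x : Fin n → ZMod 2, f x = f' x ∧ pnf a₀ a b c x = pnf a₀' a' b' c' x := by
    intro x
    have h1 : (ω : ℂ) ^ (pnf a₀ a b c x).val • e (f x)
        = (ω : ℂ) ^ (pnf a₀' a' b' c' x).val • e (f' x) := by
      rw [← hW x, h, hW' x]
    have h2 := congrFun h1 (f x)
    simp only [e, Pi.smul_apply, smul_eq_mul, Pi.single_eq_same, mul_one] at h2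
    have hf : f x = f' x := by
      by_contra hne
      rw [Pi.single_eq_of_ne hne] at h2
      simp only [mul_zero] at h2
      exact pow_ne_zero _ hω0 h2
    refine ⟨hf, ?_⟩
    rw [← hf, Pi.single_eq_same, mul_one] at h2
    exact omega_pow_inj _ _ h2
  have hfe : f = f' := DFunLike.ext f f' fun x => (key x).1
  have hp : ∀ x, pnf a₀ a b c x = pnf a₀' a' b' c' x := fun x => (key x).2
  have ha0 : a₀ = a₀' := by
    have := hp 0
    rwa [pnf_zero, pnf_zero] at this
  have hcc : c = c' := by
    funext t
    obtain ⟨⟨i, j, k⟩, hij, hjk⟩ := t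
    have e1 := F3 a₀ a b c i j k hij hjk
    have e2 := F3 a₀' a' b' c' i j k hij hjk
    have q1 := hp (Pi.single i 1)
    have q2 := hp (Pi.single j 1)
    have q3 := hp (Pi.single k 1)
    have q4 := hp (Pi.single i 1 + Pi.single j 1 + Pi.single k 1)
    have q5 := hp (Pi.single i 1 + Pi.single j 1)
    have q6 := hp (Pi.single i 1 + Pi.single k 1)
    have q7 := hp (Pi.single j 1 + Pi.single k 1)
    have q8 := hp 0
    refine val4_inj _ _ ?_
    linear_combination q1 + q2 + q3 + q4 - q5 - q6 - q7 - q8 - e1 + e2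
  have hbb : b = b' := by
    funext p
    obtain ⟨⟨i, j⟩, hij⟩ := p
    subst hcc
    have e1 := F2 a₀ a b c i j hij
    have e2 := F2 a₀' a' b' c i j hij
    have q1 := hp (Pi.single i 1)
    have q2 := hp (Pi.single j 1)
    have q3 := hp (Pi.single i 1 + Pi.single j 1)
    have q4 := hp 0
    refine val2_inj _ _ ?_
    linear_combination q1 + q2 - q3 - q4 - e1 + e2
  have haa : a = a' := by
    funext i0
    subst hcc
    subst hbb
    have e1 := F1 a₀ a b c i0
    have e2 := F1 a₀' a' b c i0
    have q1 := hp (Pi.single i0 1)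
    have q2 := hp 0
    linear_combination q1 - q2 - e1 + e2
  exact ⟨hfe, ha0, haa, hbb, hcc⟩
end
end

section
/- Fix n : ℕ with n ≥ 1 and let ω = exp(πi/4) ∈ ℂ. Let G_n be the subgroup of invertible linear operators on ℂ^{(Fin n → ZMod 2)} generated by the scalar operator ω • 1 together with: T_i (i : Fin n) with T_i e_x = ω^{(x i).val} • e_x; X_i with X_i e_x = e_{Function.update x i (x i + 1)}; and CNOT_{i,j} (i ≠ j) with CNOT_{i,j} e_x = e_{Function.update x j (x i + x j)}. Then G_n is finite and its cardinality is 2^{3 + 4n + 2·(n choose 2) + (n choose 3)} · ∏_{i=1}^{n} (2^n − 2^{i−1}). -/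
open scoped BigOperators

noncomputable section

/-!
Every element of `G_n` is, in a unique way, a product `D_f P_σ`: here `P_σ` permutes the basis
along an affine bijection `σ x = A x + v` of `𝔽₂ⁿ`, and `D_f` multiplies `e x` by `ω ^ f x`, where
the phase function `f : 𝔽₂ⁿ → ℤ/8` is `∑_T c_T ∏_{j ∈ T} x_j` with `2 ^ (#T - 1) ∣ c_T`.
Substituting an `X` or a `CNOT` into a monomial of degree `d` gives monomials of degree `≤ d`,
plus twice one of degree `d + 1`; so these phase functions are stable under affine maps, the
operators `D_f P_σ` form a group containing the generators, and, read backwards, conjugating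
`T` gates by `CNOT`s yields every such `D_f`. Affine bijections are generated by `X` gates and
transvections, i.e. `CNOT`s. Since the monomials are linearly independent over `ℤ/8`, counting
gives `8 ^ (1 + n) * 4 ^ (n choose 2) * 2 ^ (n choose 3)` phase functions and
`2 ^ n * #GL_n(𝔽₂)` affine bijections.
-/

open Finset Function
open LinearMap (GeneralLinearGroup)
open scoped Matrix

namespace CNOTDihedral

abbrev V (n : ℕ) := Fin n → ZMod 2

local notation "𝕖" => (ZMod.stdAddChar : AddChar (ZMod 8) ℂ)

lemma stdAddChar_eq_omega_pow (k : ZMod 8) : 𝕖 k = ω ^ k.val := by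
  conv_lhs => rw [← ZMod.natCast_zmod_val k, ← Int.cast_natCast]
  rw [ZMod.stdAddChar_coe, ω, ← Complex.exp_nat_mul]
  congr 1
  push_cast
  ring

lemma stdAddChar_ne_zero (k : ZMod 8) : 𝕖 k ≠ 0 := by
  rw [stdAddChar_eq_omega_pow]
  exact pow_ne_zero _ (Complex.exp_ne_zero _)

variable {n : ℕ}

def diagEnd : Multiplicative (V n → ZMod 8) →* Module.End ℂ (QState n) where
  toFun f := LinearMap.pi fun x => 𝕖 (f.toAdd x) • LinearMap.proj x
  map_one' := by ext; simp
  map_mul' f g := by ext; simp [AddChar.map_add_eq_mul, mul_assoc]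

def permEnd : Equiv.Perm (V n) →* Module.End ℂ (QState n) where
  toFun σ := LinearMap.funLeft ℂ ℂ σ.symm
  map_one' := rfl
  map_mul' _ _ := rfl

def diagOp (f : V n → ZMod 8) : GeneralLinearGroup ℂ (QState n) :=
  diagEnd.toHomUnits (Multiplicative.ofAdd f)

def permOp : Equiv.Perm (V n) →* GeneralLinearGroup ℂ (QState n) :=
  permEnd.toHomUnits

@[simp] lemma diagOp_apply (f : V n → ZMod 8) (v : QState n) (x : V n) :
    (diagOp f).val v x = 𝕖 (f x) * v x := rfl

@[simp] lemma permOp_apply (σ : Equiv.Perm (V n)) (v : QState n) (x : V n) :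
    (permOp σ).val v x = v (σ.symm x) := rfl

lemma diagOp_add (f g : V n → ZMod 8) : diagOp (f + g) = diagOp f * diagOp g :=
  map_mul _ (Multiplicative.ofAdd f) (Multiplicative.ofAdd g)

lemma diagOp_zero : diagOp (0 : V n → ZMod 8) = 1 := map_one _

lemma diagOp_neg (f : V n → ZMod 8) : diagOp (-f) = (diagOp f)⁻¹ :=
  map_inv _ (Multiplicative.ofAdd f)

lemma permOp_mul_diagOp (σ : Equiv.Perm (V n)) (f : V n → ZMod 8) :
    permOp σ * diagOp f = diagOp (f ∘ σ.symm) * permOp σ := by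
  ext v x
  simp

lemma diagOp_apply_e (f : V n → ZMod 8) (x : V n) :
    (diagOp f).val (e x) = 𝕖 (f x) • e x := by
  ext y
  by_cases h : y = x <;> simp [e, h]

lemma permOp_apply_e (σ : Equiv.Perm (V n)) (x : V n) : (permOp σ).val (e x) = e (σ x) := by
  ext y
  simp [e, Pi.single_apply, Equiv.symm_apply_eq]

lemma ext_of_apply_e {W W' : GeneralLinearGroup ℂ (QState n)}
    (h : ∀ x, W.val (e x) = W'.val (e x)) :
    W = W' :=
  Units.ext <| (Pi.basisFun ℂ (V n)).ext fun x => by simpa [e] using h x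

lemma diagOp_mul_permOp_apply_e (f : V n → ZMod 8) (σ : Equiv.Perm (V n)) (x : V n) :
    (diagOp f * permOp σ).val (e x) = 𝕖 (f (σ x)) • e (σ x) := by
  simp only [Units.val_mul, Module.End.mul_apply, permOp_apply_e, diagOp_apply_e]

lemma eq_and_eq_of_diagOp_mul_permOp_eq {f g : V n → ZMod 8} {σ τ : Equiv.Perm (V n)}
    (h : diagOp f * permOp σ = diagOp g * permOp τ) : f = g ∧ σ = τ := by
  have key (x : V n) : 𝕖 (f (σ x)) = 𝕖 (g (τ x)) * e (τ x) (σ x) := by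
    have hx := congr_fun (congrArg (fun W => W.val (e x)) h) (σ x)
    rw [diagOp_mul_permOp_apply_e, diagOp_mul_permOp_apply_e] at hx
    simpa [e] using hx
  obtain rfl : σ = τ := Equiv.ext fun x => by
    by_contra hne
    have hx := key x
    rw [e, Pi.single_apply, if_neg hne, mul_zero] at hx
    exact stdAddChar_ne_zero _ hx
  refine ⟨funext fun y => ZMod.injective_stdAddChar ?_, rfl⟩
  simpa [e] using key (σ.symm y)

def bit (u : ZMod 2) : ZMod 8 := u.val

lemma bit_add (u v : ZMod 2) : bit (u + v) = bit u + bit v - 2 * bit u * bit v := by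
  revert u v; decide

lemma bit_add_one (u : ZMod 2) : bit (u + 1) = 1 - bit u := by revert u; decide

lemma bit_mul_self (u : ZMod 2) : bit u * bit u = bit u := by revert u; decide

lemma stdAddChar_bit (u : ZMod 2) : 𝕖 (bit u) = ω ^ u.val := by
  rw [stdAddChar_eq_omega_pow]
  congr 1
  revert u; decide

def mono (T : Finset (Fin n)) (x : V n) : ZMod 8 := ∏ j ∈ T, bit (x j)

lemma bit_mul_mono (i : Fin n) (T : Finset (Fin n)) (x : V n) :
    bit (x i) * mono T x = mono (insert i T) x := by
  by_cases hi : i ∈ T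
  · rw [insert_eq_of_mem hi, mono, ← mul_prod_erase T _ hi, ← mul_assoc, bit_mul_self]
  · rw [mono, mono, prod_insert hi]

lemma mono_update_of_mem {j : Fin n} {T : Finset (Fin n)} (hj : j ∈ T) (x : V n) (u : ZMod 2) :
    mono T (update x j u) = bit u * mono (T.erase j) x := by
  rw [mono, ← mul_prod_erase T _ hj, update_self]
  exact congrArg _ (prod_congr rfl fun l hl => by rw [update_of_ne (ne_of_mem_erase hl)])

lemma mono_update_of_notMem {j : Fin n} {T : Finset (Fin n)} (hj : j ∉ T) (x : V n)
    (u : ZMod 2) : mono T (update x j u) = mono T x :=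
  prod_congr rfl fun l hl => by rw [update_of_ne (ne_of_mem_of_not_mem hl hj)]

lemma mono_indicator (T S : Finset (Fin n)) :
    mono T (fun j => if j ∈ S then 1 else 0) = if T ⊆ S then 1 else 0 := by
  have hbit (j : Fin n) : bit (if j ∈ S then 1 else 0) = if j ∈ S then 1 else 0 := by
    split_ifs <;> rfl
  simp only [mono, hbit, prod_boole]
  rfl

/-- Evaluating at indicator vectors makes the coefficient map unitriangular. -/
lemma linearIndependent_mono : LinearIndependent (ZMod 8) (mono (n := n)) := by
  rw [Fintype.linearIndependent_iff]
  intro c hc S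
  induction S using Finset.strongInduction with
  | H S ih =>
    have hS := congr_fun hc fun j => if j ∈ S then 1 else 0
    simp only [Finset.sum_apply, Pi.smul_apply, mono_indicator, smul_eq_mul,
      Pi.zero_apply] at hS
    rwa [sum_eq_single S (fun T _ hT => ?_) (by simp), if_pos subset_rfl, mul_one] at hS
    split_ifs with hTS
    · rw [ih T (ssubset_of_subset_of_ne hTS hT), zero_mul]
    · rw [mul_zero]

def xPerm (i : Fin n) : Equiv.Perm (V n) :=
  Involutive.toPerm (fun x => update x i (x i + 1)) fun x => by
    simp only [update_self, update_idem, CharTwo.add_cancel_right, update_eq_self]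

def cnotPerm {i j : Fin n} (hij : i ≠ j) : Equiv.Perm (V n) :=
  Involutive.toPerm (fun x => update x j (x i + x j)) fun x => by
    simp only [update_self, update_of_ne hij, update_idem, CharTwo.add_cancel_left,
      update_eq_self]

@[simp] lemma xPerm_apply (i : Fin n) (x : V n) : xPerm i x = update x i (x i + 1) := rfl

@[simp] lemma cnotPerm_apply {i j : Fin n} (hij : i ≠ j) (x : V n) :
    cnotPerm hij x = update x j (x i + x j) := rfl

def gatePerms (n : ℕ) : Set (Equiv.Perm (V n)) :=
  Set.range xPerm ∪ {σ | ∃ (i j : Fin n) (hij : i ≠ j), σ = cnotPerm hij}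

lemma inv_eq_self_of_mem_gatePerms {σ : Equiv.Perm (V n)} (hσ : σ ∈ gatePerms n) : σ⁻¹ = σ := by
  rcases hσ with ⟨i, rfl⟩ | ⟨i, j, hij, rfl⟩ <;> exact Involutive.toPerm_symm _

lemma comp_mem_of_mem_closure {α : Type*} {S : Set (V n → α)}
    (hS : ∀ σ ∈ gatePerms n, ∀ f ∈ S, f ∘ σ ∈ S) {σ : Equiv.Perm (V n)}
    (hσ : σ ∈ Subgroup.closure (gatePerms n)) {f : V n → α} (hf : f ∈ S) : f ∘ σ ∈ S := by
  induction hσ using Subgroup.closure_induction'' generalizing f with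
  | mem σ hσ => exact hS σ hσ f hf
  | inv_mem σ hσ => rw [inv_eq_self_of_mem_gatePerms hσ]; exact hS σ hσ f hf
  | one => exact hf
  | mul σ τ _ _ hσ hτ => exact hτ (hσ hf)

lemma mono_comp_xPerm_of_notMem {i : Fin n} {T : Finset (Fin n)} (hi : i ∉ T) :
    mono T ∘ xPerm i = mono T :=
  funext fun x => mono_update_of_notMem hi x _

lemma mono_comp_xPerm {i : Fin n} {T : Finset (Fin n)} (hi : i ∈ T) :
    mono T ∘ xPerm i = mono (T.erase i) - mono T := by
  ext x
  have h := bit_mul_mono i (T.erase i) x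
  rw [insert_erase hi] at h
  rw [comp_apply, xPerm_apply, mono_update_of_mem hi, bit_add_one, Pi.sub_apply,
    ← h]
  ring

lemma mono_comp_cnotPerm_of_notMem {i j : Fin n} (hij : i ≠ j) {T : Finset (Fin n)}
    (hj : j ∉ T) : mono T ∘ cnotPerm hij = mono T :=
  funext fun x => mono_update_of_notMem hj x _

lemma mono_comp_cnotPerm {i j : Fin n} (hij : i ≠ j) {T : Finset (Fin n)} (hj : j ∈ T) :
    mono T ∘ cnotPerm hij =
      mono (insert i (T.erase j)) + mono T - (2 : ZMod 8) • mono (insert i T) := by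
  ext x
  have hi := bit_mul_mono i (T.erase j) x
  have hj' := bit_mul_mono j (T.erase j) x
  have hiT := bit_mul_mono i T x
  rw [insert_erase hj] at hj'
  rw [comp_apply, cnotPerm_apply, mono_update_of_mem hj, bit_add, Pi.sub_apply,
    Pi.add_apply, Pi.smul_apply, smul_eq_mul, ← hi, ← hiT, ← hj']
  ring

/-- For `T = ∅` the truncated exponent is `0`, so the constant term is free; for `4 ≤ #T` the
condition forces `c T = 0`. -/
def phaseCoeffs (n : ℕ) : Submodule (ZMod 8) (Finset (Fin n) → ZMod 8) where
  carrier := {c | ∀ T, (2 : ZMod 8) ^ (T.card - 1) ∣ c T}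
  add_mem' ha hb T := dvd_add (ha T) (hb T)
  zero_mem' _ := dvd_zero _
  smul_mem' r _ hc T := Dvd.dvd.mul_left (hc T) r

def phaseFunctions (n : ℕ) : Submodule (ZMod 8) (V n → ZMod 8) :=
  (phaseCoeffs n).map (Fintype.linearCombination (ZMod 8) mono)

lemma pow_smul_mono_mem {m : ℕ} {T : Finset (Fin n)} (hT : T.card ≤ m + 1) :
    (2 : ZMod 8) ^ m • mono T ∈ phaseFunctions n := by
  refine ⟨Pi.single T (2 ^ m), fun T' => ?_, Fintype.linearCombination_apply_single _ _ _ _⟩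
  rcases eq_or_ne T' T with rfl | hT'
  · simpa using pow_dvd_pow 2 (by omega : T'.card - 1 ≤ m)
  · simp [hT']

lemma phaseFunctions_le {Q : AddSubgroup (V n → ZMod 8)}
    (hQ : ∀ T : Finset (Fin n), (2 : ZMod 8) ^ (T.card - 1) • mono T ∈ Q) :
    (phaseFunctions n).toAddSubgroup ≤ Q := by
  rintro _ ⟨c, hc, rfl⟩
  rw [Fintype.linearCombination_apply]
  refine Q.sum_mem fun T _ => ?_
  obtain ⟨r, hr⟩ := hc T
  rw [hr, mul_comm, mul_smul, ← ZMod.natCast_zmod_val r, Nat.cast_smul_eq_nsmul]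
  exact Q.nsmul_mem (hQ T) _

lemma comp_gate_mem_phaseFunctions {σ : Equiv.Perm (V n)} (hσ : σ ∈ gatePerms n)
    {f : V n → ZMod 8} (hf : f ∈ phaseFunctions n) : f ∘ σ ∈ phaseFunctions n := by
  refine phaseFunctions_le (Q := ((phaseFunctions n).comap
    (LinearMap.funLeft (ZMod 8) (ZMod 8) σ)).toAddSubgroup) (fun T => ?_) hf
  change (2 : ZMod 8) ^ (T.card - 1) • (mono T ∘ σ) ∈ phaseFunctions n
  rcases hσ with ⟨i, rfl⟩ | ⟨i, j, hij, rfl⟩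
  · by_cases hi : i ∈ T
    · rw [mono_comp_xPerm hi, smul_sub]
      exact sub_mem (pow_smul_mono_mem (by grind [card_erase_le]))
        (pow_smul_mono_mem (by omega))
    · rw [mono_comp_xPerm_of_notMem hi]
      exact pow_smul_mono_mem (by omega)
  · by_cases hj : j ∈ T
    · have hT : 0 < T.card := card_pos.2 ⟨j, hj⟩
      rw [mono_comp_cnotPerm hij hj, smul_sub, smul_add, smul_smul, ← pow_succ]
      refine sub_mem (add_mem (pow_smul_mono_mem ?_) (pow_smul_mono_mem (by omega)))
        (pow_smul_mono_mem ?_)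
      · grind [card_insert_le, card_erase_of_mem]
      · grind [card_insert_le]
    · rw [mono_comp_cnotPerm_of_notMem hij hj]
      exact pow_smul_mono_mem (by omega)

lemma comp_mem_phaseFunctions {σ : Equiv.Perm (V n)} (hσ : σ ∈ Subgroup.closure (gatePerms n))
    {f : V n → ZMod 8} (hf : f ∈ phaseFunctions n) : f ∘ σ ∈ phaseFunctions n :=
  comp_mem_of_mem_closure (S := (phaseFunctions n : Set (V n → ZMod 8)))
    (fun _ hσ _ hf => comp_gate_mem_phaseFunctions hσ hf) hσ hf

lemma card_subtype_pow_two_dvd (k : ℕ) :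
    Nat.card {a : ZMod 8 // (2 : ZMod 8) ^ k ∣ a} = 2 ^ (3 - k) := by
  rcases lt_or_ge k 3 with hk | hk
  · interval_cases k <;> rw [Nat.card_eq_fintype_card] <;> decide
  · have h0 : (2 : ZMod 8) ^ k = 0 := by
      rw [← Nat.sub_add_cancel hk, pow_add]
      exact mul_eq_zero_of_right _ (by decide)
    simp only [h0, zero_dvd_iff, Nat.sub_eq_zero_of_le hk, pow_zero]
    exact Nat.card_unique

lemma card_phaseCoeffs :
    Nat.card (phaseCoeffs n) = 2 ^ ∑ T : Finset (Fin n), (3 - (T.card - 1)) := by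
  have e : phaseCoeffs n ≃ ∀ T : Finset (Fin n), {a : ZMod 8 // 2 ^ (T.card - 1) ∣ a} :=
    Equiv.subtypePiEquivPi
  rw [Nat.card_congr e, Nat.card_pi]
  simp only [card_subtype_pow_two_dvd, prod_pow_eq_pow_sum]

lemma sum_three_sub_card_sub_one :
    ∑ T : Finset (Fin n), (3 - (T.card - 1)) = 3 + 3 * n + 2 * n.choose 2 + n.choose 3 := by
  have h := sum_powerset_apply_card (fun m => 3 - (m - 1)) (x := (univ : Finset (Fin n)))
  rw [powerset_univ, card_univ, Fintype.card_fin] at h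
  rw [h]
  have hn : ∑ m ∈ range (n + 1), n.choose m • (3 - (m - 1)) =
      ∑ m ∈ range (n + 4), n.choose m • (3 - (m - 1)) :=
    sum_subset (range_subset_range.2 (by omega)) fun m _ hm => by
      rw [Nat.choose_eq_zero_of_lt (by simpa using hm), zero_smul]
  have h4 : ∑ m ∈ range 4, n.choose m • (3 - (m - 1)) =
      ∑ m ∈ range (n + 4), n.choose m • (3 - (m - 1)) :=
    sum_subset (range_subset_range.2 (by omega)) fun m _ hm => by
      rw [show 3 - (m - 1) = 0 by simp at hm; omega, smul_zero]
  rw [hn, ← h4]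
  simp [sum_range_succ]
  ring

lemma card_phaseFunctions :
    Nat.card (phaseFunctions n) = 2 ^ (3 + 3 * n + 2 * n.choose 2 + n.choose 3) := by
  rw [phaseFunctions, ← Nat.card_congr (Submodule.equivMapOfInjective _
    (linearIndependent_iff_injective_fintypeLinearCombination.1 linearIndependent_mono) _).toEquiv,
    card_phaseCoeffs, sum_three_sub_card_sub_one]

def affinePerm (A : Matrix.GeneralLinearGroup (Fin n) (ZMod 2)) (v : V n) : Equiv.Perm (V n) where
  toFun x := A.val *ᵥ x + v
  invFun y := A⁻¹.val *ᵥ (y - v)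
  left_inv x := by simp [Matrix.mulVec_mulVec]
  right_inv y := by simp [Matrix.mulVec_mulVec]

@[simp] lemma affinePerm_apply (A : Matrix.GeneralLinearGroup (Fin n) (ZMod 2)) (v x : V n) :
    affinePerm A v x = A.val *ᵥ x + v := rfl

lemma affinePerm_mul (A B : Matrix.GeneralLinearGroup (Fin n) (ZMod 2)) (v w : V n) :
    affinePerm A v * affinePerm B w = affinePerm (A * B) (A.val *ᵥ w + v) := by
  ext1 x
  simp [Matrix.mulVec_add, Matrix.mulVec_mulVec, add_assoc]

lemma affinePerm_one_zero : affinePerm (1 : Matrix.GeneralLinearGroup (Fin n) (ZMod 2)) 0 = 1 := by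
  ext1 x
  simp

lemma affinePerm_injective : Injective (uncurry (affinePerm (n := n))) := by
  rintro ⟨A, v⟩ ⟨B, w⟩ h
  have hx (x : V n) : A.val *ᵥ x + v = B.val *ᵥ x + w := Equiv.congr_fun h x
  obtain rfl : v = w := by simpa using hx 0
  exact Prod.ext (Units.ext (Matrix.mulVec_injective (funext fun x => add_right_cancel (hx x)))) rfl

def affineGroup (n : ℕ) : Subgroup (Equiv.Perm (V n)) where
  carrier := Set.range (uncurry affinePerm)
  mul_mem' := by
    rintro _ _ ⟨⟨A, v⟩, rfl⟩ ⟨⟨B, w⟩, rfl⟩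
    exact ⟨(A * B, A.val *ᵥ w + v), (affinePerm_mul A B v w).symm⟩
  one_mem' := ⟨(1, 0), affinePerm_one_zero⟩
  inv_mem' := by
    rintro _ ⟨⟨A, v⟩, rfl⟩
    refine ⟨(A⁻¹, -(A⁻¹.val *ᵥ v)), eq_inv_of_mul_eq_one_left ?_⟩
    rw [uncurry_apply_pair, uncurry_apply_pair, affinePerm_mul, inv_mul_cancel, add_neg_cancel,
      affinePerm_one_zero]

lemma xPerm_eq_affinePerm (i : Fin n) : xPerm i = affinePerm 1 (Pi.single i 1) := by
  ext x k
  by_cases hk : k = i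
  · subst hk; simp
  · simp [hk]

lemma transvection_one_mulVec {i j : Fin n} (hij : i ≠ j) (x : V n) :
    Matrix.transvection i j (1 : ZMod 2) *ᵥ x = cnotPerm hij.symm x := by
  ext k
  by_cases hk : k = i
  · subst hk; simp [Matrix.transvection, Matrix.add_mulVec, Matrix.single_mulVec, add_comm]
  · simp [Matrix.transvection, Matrix.add_mulVec, Matrix.single_mulVec, hk]

lemma gatePerms_subset_affineGroup : gatePerms n ⊆ affineGroup n := by
  rintro _ (⟨i, rfl⟩ | ⟨i, j, hij, rfl⟩)
  · exact ⟨(1, Pi.single i 1), (xPerm_eq_affinePerm i).symm⟩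
  · refine ⟨(Matrix.SpecialLinearGroup.toGL (Matrix.SpecialLinearGroup.transvection hij.symm 1), 0),
      Equiv.ext fun x => ?_⟩
    exact (add_zero _).trans (transvection_one_mulVec hij.symm x)

lemma affinePerm_one_mem_closure (v : V n) :
    affinePerm 1 v ∈ Subgroup.closure (gatePerms n) := by
  rw [← univ_sum_single v]
  refine sum_induction _ (fun w => affinePerm 1 w ∈ Subgroup.closure (gatePerms n))
    (fun a b ha hb => ?_) (by rw [affinePerm_one_zero]; exact one_mem _) fun i _ => ?_
  · have hab : affinePerm 1 (a + b) = affinePerm 1 b * affinePerm 1 a := by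
      rw [affinePerm_mul]
      simp
    rw [hab]
    exact mul_mem hb ha
  · obtain h | h : v i = 0 ∨ v i = 1 := by generalize v i = a; revert a; decide
    · rw [h, Pi.single_zero, affinePerm_one_zero]
      exact one_mem _
    · rw [h, ← xPerm_eq_affinePerm]
      exact Subgroup.subset_closure (Or.inl ⟨i, rfl⟩)

lemma affinePerm_zero_mem_closure (A : Matrix.GeneralLinearGroup (Fin n) (ZMod 2)) :
    affinePerm A 0 ∈ Subgroup.closure (gatePerms n) := by
  obtain ⟨σ, hσ, hσA⟩ : ∃ σ ∈ Subgroup.closure (gatePerms n), ∀ x, σ x = A.val *ᵥ x := by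
    refine Matrix.diagonal_transvection_induction
      (fun M => ∃ σ ∈ Subgroup.closure (gatePerms n), ∀ x, σ x = M *ᵥ x) A.val
      (fun D hD => ⟨1, one_mem _, fun x => ?_⟩) (fun t => ?_)
      fun M N ⟨σ, hσ, hσM⟩ ⟨τ, hτ, hτN⟩ =>
        ⟨σ * τ, mul_mem hσ hτ, fun x => by simp [hσM, hτN, Matrix.mulVec_mulVec]⟩
    · have hD1 : D = fun _ => 1 := funext fun i => by
        have hDi : D i ≠ 0 := fun h0 => Matrix.GeneralLinearGroup.det_ne_zero A
          (by rw [← hD, Matrix.det_diagonal, prod_eq_zero (mem_univ i) h0])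
        revert hDi; generalize D i = a; revert a; decide
      simp [hD1]
    · obtain h | h : t.c = 0 ∨ t.c = 1 := by generalize t.c = a; revert a; decide
      · exact ⟨1, one_mem _, fun x => by simp [Matrix.TransvectionStruct.toMatrix, h]⟩
      · refine ⟨cnotPerm t.hij.symm, Subgroup.subset_closure (Or.inr ⟨_, _, _, rfl⟩), fun x => ?_⟩
        rw [Matrix.TransvectionStruct.toMatrix, h, transvection_one_mulVec t.hij]
  convert hσ
  ext1 x
  simp [hσA]

lemma affineGroup_le_closure : affineGroup n ≤ Subgroup.closure (gatePerms n) := by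
  rintro _ ⟨⟨A, v⟩, rfl⟩
  have h : affinePerm A v = affinePerm 1 v * affinePerm A 0 := by
    rw [affinePerm_mul]
    simp
  rw [uncurry_apply_pair, h]
  exact mul_mem (affinePerm_one_mem_closure v) (affinePerm_zero_mem_closure A)

lemma card_affineGroup :
    Nat.card (affineGroup n) = (∏ i : Fin n, (2 ^ n - 2 ^ (i : ℕ))) * 2 ^ n := by
  rw [← Nat.card_congr (show _ ≃ affineGroup n from Equiv.ofInjective _ affinePerm_injective),
    Nat.card_prod,
    Matrix.card_GL_field, ZMod.card, Nat.card_eq_fintype_card (α := V n), Fintype.card_fun,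
    ZMod.card, Fintype.card_fin]

lemma diagOp_mono_empty_apply_e (x : V n) : (diagOp (mono ∅)).val (e x) = ω • e x := by
  rw [diagOp_apply_e, mono, prod_empty, stdAddChar_eq_omega_pow,
    show (1 : ZMod 8).val = 1 from rfl, pow_one]

lemma diagOp_mono_singleton_apply_e (i : Fin n) (x : V n) :
    (diagOp (mono {i})).val (e x) = ω ^ (x i).val • e x := by
  rw [diagOp_apply_e, mono, prod_singleton, stdAddChar_bit]

lemma permOp_mem_dihedralGens {σ : Equiv.Perm (V n)} (hσ : σ ∈ gatePerms n) :
    permOp σ ∈ dihedralGens n := by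
  rcases hσ with ⟨i, rfl⟩ | ⟨i, j, hij, rfl⟩
  · exact Or.inl (Or.inr ⟨i, permOp_apply_e _⟩)
  · exact Or.inr ⟨i, j, hij, permOp_apply_e _⟩

lemma permOp_mem_of_mem_affineGroup {σ : Equiv.Perm (V n)} (hσ : σ ∈ affineGroup n) :
    permOp σ ∈ dihedralGroup' n := by
  have h : (Subgroup.closure (gatePerms n)).map permOp ≤ dihedralGroup' n := by
    rw [MonoidHom.map_closure, Subgroup.closure_le]
    rintro _ ⟨τ, hτ, rfl⟩
    exact Subgroup.subset_closure (permOp_mem_dihedralGens hτ)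
  exact h ⟨σ, affineGroup_le_closure hσ, rfl⟩

def diagPhases (n : ℕ) : AddSubgroup (V n → ZMod 8) where
  carrier := {f | diagOp f ∈ dihedralGroup' n}
  add_mem' {f g} hf hg := by
    change diagOp (f + g) ∈ dihedralGroup' n
    rw [diagOp_add]
    exact (dihedralGroup' n).mul_mem hf hg
  zero_mem' := by
    change diagOp 0 ∈ dihedralGroup' n
    rw [diagOp_zero]
    exact (dihedralGroup' n).one_mem
  neg_mem' {f} hf := by
    change diagOp (-f) ∈ dihedralGroup' n
    rw [diagOp_neg]
    exact (dihedralGroup' n).inv_mem hf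

lemma mem_diagPhases {f : V n → ZMod 8} : f ∈ diagPhases n ↔ diagOp f ∈ dihedralGroup' n :=
  Iff.rfl

lemma comp_mem_diagPhases {σ : Equiv.Perm (V n)} (hσ : permOp σ ∈ dihedralGroup' n)
    {f : V n → ZMod 8} (hf : f ∈ diagPhases n) : f ∘ σ ∈ diagPhases n := by
  have h : diagOp (f ∘ σ) = (permOp σ)⁻¹ * diagOp f * permOp σ := by
    rw [mul_assoc, eq_inv_mul_iff_mul_eq, permOp_mul_diagOp]
    simp [comp_assoc]
  rw [mem_diagPhases, h]
  exact mul_mem (mul_mem (inv_mem hσ) hf) hσ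

lemma two_smul_mono_eq {i j : Fin n} (hij : i ≠ j) {T : Finset (Fin n)} (hi : i ∈ T)
    (hj : j ∈ T) :
    (2 : ZMod 8) • mono T =
      mono (T.erase j) + mono (T.erase i) - mono (T.erase i) ∘ cnotPerm hij := by
  have key := mono_comp_cnotPerm hij (mem_erase.2 ⟨hij.symm, hj⟩)
  rw [insert_erase hi, erase_right_comm, insert_erase (mem_erase.2 ⟨hij, hi⟩)] at key
  rw [key]
  abel

lemma pow_smul_mono_mem_diagPhases (T : Finset (Fin n)) :
    (2 : ZMod 8) ^ (T.card - 1) • mono T ∈ diagPhases n := by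
  induction T using Finset.strongInduction with
  | H T ih =>
  rcases lt_or_ge T.card 2 with hT | hT
  · rw [show T.card - 1 = 0 by omega, pow_zero, one_smul, mem_diagPhases]
    obtain h0 | h1 : T.card = 0 ∨ T.card = 1 := by omega
    · rw [card_eq_zero.1 h0]
      exact Subgroup.subset_closure (Or.inl (Or.inl (Or.inl diagOp_mono_empty_apply_e)))
    · obtain ⟨i, rfl⟩ := card_eq_one.1 h1
      exact Subgroup.subset_closure
        (Or.inl (Or.inl (Or.inr ⟨i, diagOp_mono_singleton_apply_e i⟩)))
  · obtain ⟨i, hi, j, hj, hij⟩ := one_lt_card.1 hT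
    have ih' {k : Fin n} (hk : k ∈ T) :
        (2 : ZMod 8) ^ (T.card - 2) • mono (T.erase k) ∈ diagPhases n := by
      simpa [card_erase_of_mem hk, Nat.sub_sub] using ih _ (erase_ssubset hk)
    have hcnot : permOp (cnotPerm hij) ∈ dihedralGroup' n :=
      Subgroup.subset_closure (permOp_mem_dihedralGens (Or.inr ⟨i, j, hij, rfl⟩))
    rw [show T.card - 1 = T.card - 2 + 1 by omega, pow_succ, mul_smul, two_smul_mono_eq hij hi hj,
      smul_sub, smul_add, show (2 : ZMod 8) ^ (T.card - 2) • (mono (T.erase i) ∘ cnotPerm hij) =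
        ((2 : ZMod 8) ^ (T.card - 2) • mono (T.erase i)) ∘ cnotPerm hij from rfl]
    exact sub_mem (add_mem (ih' hj) (ih' hi)) (comp_mem_diagPhases hcnot (ih' hi))

def normalForms (n : ℕ) : Subgroup (GeneralLinearGroup ℂ (QState n)) where
  carrier := {W | ∃ f ∈ phaseFunctions n, ∃ σ ∈ affineGroup n, diagOp f * permOp σ = W}
  mul_mem' := by
    rintro _ _ ⟨f, hf, σ, hσ, rfl⟩ ⟨g, hg, τ, hτ, rfl⟩
    refine ⟨f + g ∘ ⇑σ⁻¹, add_mem hf (comp_mem_phaseFunctions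
      (affineGroup_le_closure (inv_mem hσ)) hg), σ * τ, mul_mem hσ hτ, ?_⟩
    rw [mul_assoc (diagOp f), ← mul_assoc (permOp σ), permOp_mul_diagOp, diagOp_add, map_mul]
    simp only [mul_assoc]
    rfl
  one_mem' := ⟨0, zero_mem _, 1, one_mem _, by rw [diagOp_zero, map_one, one_mul]⟩
  inv_mem' := by
    rintro _ ⟨f, hf, σ, hσ, rfl⟩
    refine ⟨-f ∘ σ, neg_mem (comp_mem_phaseFunctions (affineGroup_le_closure hσ) hf), σ⁻¹,
      inv_mem hσ, ?_⟩
    rw [mul_inv_rev, ← diagOp_neg, ← map_inv, permOp_mul_diagOp]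
    rfl

lemma dihedralGens_subset_normalForms : dihedralGens n ⊆ normalForms n := by
  have hperm {σ} (hσ : σ ∈ gatePerms n) {W : GeneralLinearGroup ℂ (QState n)}
      (hW : ∀ x, W.val (e x) = e (σ x)) : W ∈ normalForms n :=
    ⟨0, zero_mem _, σ, gatePerms_subset_affineGroup hσ, ext_of_apply_e fun x => by
      rw [diagOp_zero, one_mul, permOp_apply_e, hW]⟩
  have hdiag {T : Finset (Fin n)} (hT : T.card ≤ 1) {W : GeneralLinearGroup ℂ (QState n)}
      (hW : ∀ x, W.val (e x) = (diagOp (mono T)).val (e x)) : W ∈ normalForms n :=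
    ⟨mono T, by simpa using pow_smul_mono_mem (m := 0) hT, 1, one_mem _, ext_of_apply_e fun x => by
      rw [map_one, mul_one, hW]⟩
  rintro W (((hW | ⟨i, hW⟩) | ⟨i, hW⟩) | ⟨i, j, hij, hW⟩)
  · exact hdiag (T := ∅) (by simp) fun x => by rw [hW, diagOp_mono_empty_apply_e]
  · exact hdiag (T := {i}) (by simp) fun x => by rw [hW, diagOp_mono_singleton_apply_e]
  · exact hperm (Or.inl ⟨i, rfl⟩) hW
  · exact hperm (Or.inr ⟨i, j, hij, rfl⟩) hW

lemma dihedralGroup'_eq_normalForms : dihedralGroup' n = normalForms n := by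
  refine le_antisymm ((Subgroup.closure_le _).2 dihedralGens_subset_normalForms) ?_
  rintro _ ⟨f, hf, σ, hσ, rfl⟩
  exact mul_mem (phaseFunctions_le (pow_smul_mono_mem_diagPhases (n := n)) hf)
    (permOp_mem_of_mem_affineGroup hσ)

lemma mem_dihedralGroup'_iff {W : GeneralLinearGroup ℂ (QState n)} :
    W ∈ dihedralGroup' n ↔
      ∃ f ∈ phaseFunctions n, ∃ σ ∈ affineGroup n, diagOp f * permOp σ = W := by
  rw [dihedralGroup'_eq_normalForms]
  rfl

lemma diagOp_mul_permOp_mem {f : V n → ZMod 8} (hf : f ∈ phaseFunctions n)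
    {σ : Equiv.Perm (V n)} (hσ : σ ∈ affineGroup n) : diagOp f * permOp σ ∈ dihedralGroup' n :=
  mem_dihedralGroup'_iff.2 ⟨f, hf, σ, hσ, rfl⟩

def normalFormEquiv : phaseFunctions n × affineGroup n ≃ dihedralGroup' n :=
  Equiv.ofBijective (fun p => ⟨diagOp (p.1 : V n → ZMod 8) * permOp (p.2 : Equiv.Perm (V n)),
    diagOp_mul_permOp_mem p.1.2 p.2.2⟩) <| by
    refine ⟨fun p q h => ?_, ?_⟩
    · obtain ⟨h₁, h₂⟩ := eq_and_eq_of_diagOp_mul_permOp_eq (congrArg Subtype.val h)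
      exact Prod.ext (Subtype.ext h₁) (Subtype.ext h₂)
    · rintro ⟨W, hW⟩
      obtain ⟨f, hf, σ, hσ, rfl⟩ := mem_dihedralGroup'_iff.1 hW
      exact ⟨(⟨f, hf⟩, ⟨σ, hσ⟩), rfl⟩

end CNOTDihedral

theorem stmt11_general {n : ℕ} :
    Finite (dihedralGroup' n) ∧
    Nat.card (dihedralGroup' n) =
      2 ^ (3 + 4 * n + 2 * n.choose 2 + n.choose 3) *
        ∏ i ∈ Finset.Icc 1 n, (2 ^ n - 2 ^ (i - 1)) := by
  refine ⟨.of_equiv _ CNOTDihedral.normalFormEquiv, ?_⟩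
  rw [← Nat.card_congr CNOTDihedral.normalFormEquiv, Nat.card_prod,
    CNOTDihedral.card_phaseFunctions, CNOTDihedral.card_affineGroup,
    Fin.prod_univ_eq_prod_range (fun i => 2 ^ n - 2 ^ i), ← Finset.Ico_add_one_right_eq_Icc,
    Finset.prod_Ico_eq_prod_range]
  simp only [add_tsub_cancel_right, add_tsub_cancel_left]
  ring

theorem stmt11 {n : ℕ} (hn : 1 ≤ n) :
    Finite (dihedralGroup' n) ∧
    Nat.card (dihedralGroup' n) =
      2 ^ (3 + 4 * n + 2 * n.choose 2 + n.choose 3) *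
        ∏ i ∈ Finset.Icc 1 n, (2 ^ n - 2 ^ (i - 1)) :=
  stmt11_general
end
end

section
/- Fix n : ℕ with n ≥ 1 and let ω = exp(πi/4) ∈ ℂ. Let H_n be the subgroup of invertible linear operators on ℂ^{(Fin n → ZMod 2)} generated by: T_i (i : Fin n) with T_i e_x = ω^{(x i).val} • e_x, and CNOT_{i,j} (i ≠ j) with CNOT_{i,j} e_x = e_{Function.update x j (x i + x j)}. Then H_n is finite and its cardinality is 2^{3n + 2·(n choose 2) + (n choose 3)} · ∏_{i=1}^{n} (2^n − 2^{i−1}). -/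
open scoped BigOperators

noncomputable section

/-- The generators of the group of `n`-qubit CNOT+T operators: the `T` gates and the
`CNOT` gates, each specified by its action on the standard basis vectors. -/
def cnotTGens (n : ℕ) : Set (LinearMap.GeneralLinearGroup ℂ (QState n)) :=
  {W | ∃ i : Fin n, ∀ x, W.val (e x) = ω ^ (x i).val • e x} ∪
  {W | ∃ i j : Fin n, i ≠ j ∧ ∀ x, W.val (e x) = e (Function.update x j (x i + x j))}

/-- The group `H_n` of `n`-qubit CNOT+T operators. -/
def cnotTGroup (n : ℕ) : Subgroup (LinearMap.GeneralLinearGroup ℂ (QState n)) :=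
  Subgroup.closure (cnotTGens n)

/-!
Each generator sends `e x` to `ω ^ f x • e (σ x)` with `σ ∈ GL(n, 𝔽₂)` and `f : 𝔽₂ⁿ → ℤ/8`, and
such monomial operators compose like a semidirect product. CNOT gates realise the transvections,
which generate `GL(n, 𝔽₂)`, and conjugating a `T` gate by a linear map realises every parity
phase `x ↦ [v ⬝ x] ∈ {0, 1} ⊆ ℤ/8`. Hence `H_n` consists of the monomial operators with arbitrary
`σ` and phase `f` in the additive group `P` generated by the parities, and
`|H_n| = |GL(n, 𝔽₂)| · |P|`.

Every function `𝔽₂ⁿ → ℤ/8` is uniquely a multilinear polynomial `∑_T a_T ∏_{j ∈ T} [x_j]`.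
Iterating `[a + b] = [a] + [b] - 2 [a] [b]` expands a parity with coefficients `(-2) ^ (|T| - 1)`,
so `P` consists of the polynomials with `a_∅ = 0` and `a_T` a multiple of `(-2) ^ (|T| - 1)`.
As `(-2) ^ 3 = 0` in `ℤ/8`, only `|T| ≤ 3` contributes, which gives
`8 ^ n · 4 ^ (n choose 2) · 2 ^ (n choose 3)` such polynomials.
-/

lemma ZMod.eq_one_of_ne_zero {a : ZMod 2} (h : a ≠ 0) : a = 1 := by
  revert a
  decide

lemma Function.update_eq_add_single_sub {ι G : Type*} [DecidableEq ι] [AddCommGroup G] (x : ι → G)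
    (i : ι) (a : G) : update x i a = x + Pi.single i (a - x i) := by
  ext k
  obtain rfl | hk := eq_or_ne k i <;> simp [*]

namespace CnotT

open Function Matrix Finset

abbrev V (n : ℕ) := Fin n → ZMod 2

local notation "χ" => (ZMod.stdAddChar : AddChar (ZMod 8) ℂ)

variable {n : ℕ}

lemma ω_pow_eq_stdAddChar (m : ℕ) : ω ^ m = χ m := by
  have h := ZMod.stdAddChar_coe (N := 8) (m : ℤ)
  push_cast at h
  rw [h, ω, ← Complex.exp_nat_mul]
  congr 1
  ring

lemma stdAddChar_ne_zero (a : ZMod 8) : χ a ≠ 0 := by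
  rw [ZMod.stdAddChar_apply]
  exact Circle.coe_ne_zero _

def monomialOp (σ : V n ≃ₗ[ZMod 2] V n) (f : V n → ZMod 8) :
    LinearMap.GeneralLinearGroup ℂ (QState n) where
  val := LinearMap.pi fun y => χ (f (σ.symm y)) • LinearMap.proj (σ.symm y)
  inv := LinearMap.pi fun x => χ (-f x) • LinearMap.proj (σ x)
  val_inv := by
    ext ψ y
    simp [← mul_assoc, ← AddChar.map_add_eq_mul]
  inv_val := by
    ext ψ x
    simp [← mul_assoc, ← AddChar.map_add_eq_mul]

lemma monomialOp_apply_e (σ : V n ≃ₗ[ZMod 2] V n) (f : V n → ZMod 8) (x : V n) :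
    (monomialOp σ f).val (e x) = χ (f x) • e (σ x) := by
  ext y
  obtain rfl | hy := eq_or_ne y (σ x)
  · simp [monomialOp, e]
  · have : σ.symm y ≠ x := fun h => hy (by rw [← h, LinearEquiv.apply_symm_apply])
    simp [monomialOp, e, hy, this]

lemma ext_of_apply_e {W W' : LinearMap.GeneralLinearGroup ℂ (QState n)}
    (h : ∀ x, W.val (e x) = W'.val (e x)) : W = W' :=
  Units.ext <| (Pi.basisFun ℂ (V n)).ext fun x => by simpa [e] using h x

lemma monomialOp_mul (σ τ : V n ≃ₗ[ZMod 2] V n) (f g : V n → ZMod 8) :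
    monomialOp σ f * monomialOp τ g = monomialOp (σ * τ) (f ∘ τ + g) := by
  refine ext_of_apply_e fun x => ?_
  rw [Units.val_mul, Module.End.mul_apply, monomialOp_apply_e, map_smul, monomialOp_apply_e,
    monomialOp_apply_e, smul_smul, Pi.add_apply, AddChar.map_add_eq_mul, mul_comm]
  rfl

lemma monomialOp_one_zero : monomialOp (1 : V n ≃ₗ[ZMod 2] V n) 0 = 1 :=
  ext_of_apply_e fun x => by simp [monomialOp_apply_e]

lemma monomialOp_one_add (f g : V n → ZMod 8) :
    monomialOp 1 (f + g) = monomialOp 1 f * monomialOp 1 g := by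
  rw [monomialOp_mul, one_mul]
  rfl

lemma monomialOp_injective2 : Injective2 (monomialOp (n := n)) := by
  intro σ τ f g h
  have hx (x : V n) : χ (f x) • e (σ x) = χ (g x) • e (τ x) := by
    simp only [← monomialOp_apply_e, h]
  have hστ : σ = τ := LinearEquiv.ext fun x => by
    by_contra hne
    simpa [e, Pi.single_apply, hne, stdAddChar_ne_zero] using congrFun (hx x) (σ x)
  subst hστ
  refine ⟨rfl, funext fun x => ZMod.injective_stdAddChar ?_⟩
  simpa [e] using congrFun (hx x) (σ x)

def updateRowEquiv (v : V n) (i : Fin n) (hv : v i = 1) : V n ≃ₗ[ZMod 2] V n :=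
  LinearEquiv.ofInvolutive (toLin' ((1 : Matrix (Fin n) (Fin n) (ZMod 2)).updateRow i v))
    fun x => by
      have hi : v ⬝ᵥ update x i (v ⬝ᵥ x) = x i := by
        rw [update_eq_add_single_sub, dotProduct_add, dotProduct_single, hv, one_mul]
        generalize v ⬝ᵥ x = a
        generalize x i = b
        revert a b
        decide
      simp only [toLin'_apply, updateRow_mulVec, one_mulVec, update_idem, hi, update_eq_self]

lemma updateRowEquiv_apply (v : V n) (i : Fin n) (hv : v i = 1) (x : V n) :
    updateRowEquiv v i hv x = update x i (v ⬝ᵥ x) := by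
  change toLin' _ x = _
  rw [toLin'_apply, updateRow_mulVec, one_mulVec]

def cnot (i j : Fin n) (h : i ≠ j) : V n ≃ₗ[ZMod 2] V n :=
  updateRowEquiv (Pi.single i 1 + Pi.single j 1) j (by simp [h.symm])

lemma cnot_apply (i j : Fin n) (h : i ≠ j) (x : V n) :
    cnot i j h x = update x j (x i + x j) := by
  simp [cnot, updateRowEquiv_apply, add_dotProduct]

lemma transvection_mulVec_eq_cnot (i j : Fin n) (h : i ≠ j) (x : V n) :
    transvection j i 1 *ᵥ x = cnot i j h x := by
  ext k
  obtain rfl | hk := eq_or_ne k j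
  · simp [cnot_apply, transvection, add_mulVec, single_mulVec, add_comm]
  · simp [cnot_apply, transvection, add_mulVec, single_mulVec, hk]

def bit : ZMod 2 →* ZMod 8 where
  toFun a := a.val
  map_one' := rfl
  map_mul' := by decide

@[simp] lemma bit_zero : bit 0 = 0 := rfl

lemma bit_add (a b : ZMod 2) : bit (a + b) = bit a + bit b * (1 - 2 * bit a) := by
  revert a b
  decide

def parity (v x : V n) : ZMod 8 := bit (v ⬝ᵥ x)

lemma parity_single (i : Fin n) (x : V n) : parity (Pi.single i 1) x = bit (x i) := by
  simp [parity, single_dotProduct]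

lemma parity_comp (v : V n) (τ : V n →ₗ[ZMod 2] V n) :
    parity v ∘ τ = parity (v ᵥ* LinearMap.toMatrix' τ) := by
  ext x
  simp [parity, ← LinearMap.toMatrix'_mulVec, dotProduct_mulVec]

def phaseGroup (n : ℕ) : AddSubgroup (V n → ZMod 8) := AddSubgroup.closure (Set.range parity)

lemma comp_mem_phaseGroup (τ : V n →ₗ[ZMod 2] V n) {f : V n → ZMod 8} (hf : f ∈ phaseGroup n) :
    f ∘ τ ∈ phaseGroup n := by
  induction hf using AddSubgroup.closure_induction with
  | mem _ hg =>
    obtain ⟨v, rfl⟩ := hg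
    exact parity_comp v τ ▸ AddSubgroup.subset_closure ⟨_, rfl⟩
  | zero => exact zero_mem _
  | add _ _ _ _ hf hg => exact add_mem hf hg
  | neg _ _ hf => exact neg_mem hf

def monomialGroup (n : ℕ) : Subgroup (LinearMap.GeneralLinearGroup ℂ (QState n)) where
  carrier := Set.range fun p : (V n ≃ₗ[ZMod 2] V n) × phaseGroup n => monomialOp p.1 p.2
  mul_mem' := by
    rintro _ _ ⟨⟨σ, f, hf⟩, rfl⟩ ⟨⟨τ, g, hg⟩, rfl⟩
    exact ⟨(σ * τ, ⟨f ∘ τ + g, add_mem (comp_mem_phaseGroup τ.toLinearMap hf) hg⟩),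
      (monomialOp_mul σ τ f g).symm⟩
  one_mem' := ⟨(1, 0), monomialOp_one_zero⟩
  inv_mem' := by
    rintro _ ⟨⟨σ, f, hf⟩, rfl⟩
    refine ⟨(σ⁻¹, ⟨-(f ∘ σ.symm), neg_mem (comp_mem_phaseGroup σ.symm.toLinearMap hf)⟩),
      eq_inv_of_mul_eq_one_left ?_⟩
    rw [monomialOp_mul, inv_mul_cancel, ← monomialOp_one_zero]
    congr
    ext x
    simp

lemma card_monomialGroup :
    Nat.card (monomialGroup n) = Nat.card (V n ≃ₗ[ZMod 2] V n) * Nat.card (phaseGroup n) := by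
  have hinj : Injective fun p : (V n ≃ₗ[ZMod 2] V n) × phaseGroup n => monomialOp p.1 p.2 :=
    fun _ _ h => Prod.ext (monomialOp_injective2 h).1 (Subtype.ext (monomialOp_injective2 h).2)
  rw [← Nat.card_prod, ← Nat.card_range_of_injective hinj]
  rfl

def tGate (i : Fin n) : LinearMap.GeneralLinearGroup ℂ (QState n) :=
  monomialOp 1 (parity (Pi.single i 1))

def cnotGate (i j : Fin n) (h : i ≠ j) : LinearMap.GeneralLinearGroup ℂ (QState n) :=
  monomialOp (cnot i j h) 0

lemma tGate_apply_e (i : Fin n) (x : V n) : (tGate i).val (e x) = ω ^ (x i).val • e x := by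
  rw [tGate, monomialOp_apply_e, parity_single, ω_pow_eq_stdAddChar]
  rfl

lemma cnotGate_apply_e (i j : Fin n) (h : i ≠ j) (x : V n) :
    (cnotGate i j h).val (e x) = e (update x j (x i + x j)) := by
  simp [cnotGate, monomialOp_apply_e, cnot_apply]

lemma tGate_mem_cnotTGroup (i : Fin n) : tGate i ∈ cnotTGroup n :=
  Subgroup.subset_closure (Or.inl ⟨i, tGate_apply_e i⟩)

lemma cnotGate_mem_cnotTGroup (i j : Fin n) (h : i ≠ j) : cnotGate i j h ∈ cnotTGroup n :=
  Subgroup.subset_closure (Or.inr ⟨i, j, h, cnotGate_apply_e i j h⟩)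

lemma cnotTGens_subset_monomialGroup : cnotTGens n ⊆ monomialGroup n := by
  rintro W (⟨i, hW⟩ | ⟨i, j, hij, hW⟩)
  · refine ⟨(1, ⟨parity (Pi.single i 1), AddSubgroup.subset_closure ⟨_, rfl⟩⟩), ?_⟩
    exact ext_of_apply_e fun x => by rw [hW, ← tGate_apply_e]; rfl
  · refine ⟨(cnot i j hij, 0), ?_⟩
    exact ext_of_apply_e fun x => by rw [hW, ← cnotGate_apply_e i j hij]; rfl

lemma exists_monomialOp_mem_cnotTGroup_of_det_ne_zero {M : Matrix (Fin n) (Fin n) (ZMod 2)}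
    (hM : M.det ≠ 0) :
    ∃ τ : V n ≃ₗ[ZMod 2] V n, monomialOp τ 0 ∈ cnotTGroup n ∧ ∀ x, τ x = M *ᵥ x := by
  refine diagonal_transvection_induction_of_det_ne_zero
    (fun M => ∃ τ : V n ≃ₗ[ZMod 2] V n, monomialOp τ 0 ∈ cnotTGroup n ∧ ∀ x, τ x = M *ᵥ x)
    M hM ?_ ?_ ?_
  · intro D hD
    have hD1 (i : Fin n) : D i = 1 :=
      ZMod.eq_one_of_ne_zero (prod_ne_zero_iff.1 (det_diagonal (d := D) ▸ hD) i (mem_univ _))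
    refine ⟨1, monomialOp_one_zero ▸ one_mem _, fun x => ?_⟩
    ext i
    simp [mulVec_diagonal, hD1]
  · rintro ⟨i, j, hij, c⟩
    obtain rfl | hc := eq_or_ne c 0
    · exact ⟨1, monomialOp_one_zero ▸ one_mem _, fun x => by simp⟩
    · rw [ZMod.eq_one_of_ne_zero hc]
      exact ⟨cnot j i hij.symm, cnotGate_mem_cnotTGroup j i hij.symm,
        fun x => (transvection_mulVec_eq_cnot j i hij.symm x).symm⟩
  · rintro A B - - ⟨σ, hσ, hσA⟩ ⟨τ, hτ, hτB⟩
    refine ⟨σ * τ, ?_, fun x => by simp [hσA, hτB, mulVec_mulVec]⟩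
    have h := monomialOp_mul σ τ 0 0
    simp only [Pi.zero_comp, add_zero] at h
    exact h ▸ mul_mem hσ hτ

lemma monomialOp_zero_mem_cnotTGroup (σ : V n ≃ₗ[ZMod 2] V n) : monomialOp σ 0 ∈ cnotTGroup n := by
  have hσ : (LinearMap.toMatrix' σ.toLinearMap).det ≠ 0 := by
    rw [LinearMap.det_toMatrix']
    exact σ.isUnit_det'.ne_zero
  obtain ⟨τ, hτ, hτσ⟩ := exists_monomialOp_mem_cnotTGroup_of_det_ne_zero hσ
  rwa [LinearEquiv.ext fun x => (hτσ x).trans (LinearMap.toMatrix'_mulVec _ x)] at hτ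

lemma monomialOp_one_parity_mem_cnotTGroup (v : V n) : monomialOp 1 (parity v) ∈ cnotTGroup n := by
  obtain rfl | hv := eq_or_ne v 0
  · have h0 : parity (0 : V n) = 0 := by ext; simp [parity]
    exact h0 ▸ monomialOp_one_zero ▸ one_mem _
  obtain ⟨i, hi⟩ := Function.ne_iff.1 hv
  set σ := updateRowEquiv v i (ZMod.eq_one_of_ne_zero hi) with hσ
  have hσi (x : V n) : parity (Pi.single i 1) (σ x) = parity v x := by
    rw [parity_single, hσ, updateRowEquiv_apply, update_self, parity]
  have h : monomialOp 1 (parity v) = monomialOp σ⁻¹ 0 * tGate i * monomialOp σ 0 := by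
    rw [tGate, monomialOp_mul, monomialOp_mul, mul_one, inv_mul_cancel]
    congr
    ext x
    simp [hσi]
  rw [h]
  exact mul_mem (mul_mem (monomialOp_zero_mem_cnotTGroup _) (tGate_mem_cnotTGroup i))
    (monomialOp_zero_mem_cnotTGroup _)

lemma monomialOp_one_mem_cnotTGroup {f : V n → ZMod 8} (hf : f ∈ phaseGroup n) :
    monomialOp 1 f ∈ cnotTGroup n := by
  induction hf using AddSubgroup.closure_induction with
  | mem _ hg =>
    obtain ⟨v, rfl⟩ := hg
    exact monomialOp_one_parity_mem_cnotTGroup v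
  | zero => exact monomialOp_one_zero ▸ one_mem _
  | add f g _ _ hf hg => exact monomialOp_one_add f g ▸ mul_mem hf hg
  | neg f _ hf =>
    have h : monomialOp 1 (-f) = (monomialOp 1 f)⁻¹ := eq_inv_of_mul_eq_one_left <| by
      rw [← monomialOp_one_add, neg_add_cancel, monomialOp_one_zero]
    exact h ▸ inv_mem hf

theorem cnotTGroup_eq_monomialGroup : cnotTGroup n = monomialGroup n := by
  refine le_antisymm ((Subgroup.closure_le _).2 cnotTGens_subset_monomialGroup) ?_
  rintro _ ⟨⟨σ, f, hf⟩, rfl⟩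
  show monomialOp σ f ∈ _
  have h : monomialOp σ f = monomialOp σ 0 * monomialOp 1 f := by
    rw [monomialOp_mul, mul_one]
    simp
  exact h ▸ mul_mem (monomialOp_zero_mem_cnotTGroup σ) (monomialOp_one_mem_cnotTGroup hf)

section Monomials

variable {ι : Type*}

def monomial (T : Finset ι) (x : ι → ZMod 2) : ZMod 8 := ∏ j ∈ T, bit (x j)

def weight : ℕ → ZMod 8
  | 0 => 0
  | k + 1 => (-2) ^ k

lemma neg_two_pow_eq_sub_two_mul_weight (k : ℕ) :
    (-2 : ZMod 8) ^ k = (if k = 0 then 1 else 0) - 2 * weight k := by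
  cases k <;> simp [weight, pow_succ']

lemma bit_sum_eq [DecidableEq ι] (S : Finset ι) (y : ι → ZMod 2) :
    bit (∑ j ∈ S, y j) = ∑ T ∈ S.powerset, weight #T * monomial T y := by
  induction S using Finset.induction_on with
  | empty => simp [weight]
  | insert a S ha ih =>
    have hpow : ∑ T ∈ S.powerset, (-2) ^ #T * monomial T y = 1 - 2 * bit (∑ j ∈ S, y j) := by
      simp_rw [neg_two_pow_eq_sub_two_mul_weight, sub_mul, sum_sub_distrib, ih,
        card_eq_zero, ite_mul, one_mul, zero_mul, sum_ite_eq',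
        empty_mem_powerset, if_true, monomial, prod_empty, mul_assoc, mul_sum]
    have hins (T) (hT : T ∈ S.powerset) : weight #(insert a T) * monomial (insert a T) y =
        bit (y a) * ((-2) ^ #T * monomial T y) := by
      have haT : a ∉ T := fun h => ha (mem_powerset.1 hT h)
      rw [card_insert_of_notMem haT, monomial, prod_insert haT, weight, monomial]
      ring
    rw [sum_insert ha, sum_powerset_insert ha, sum_congr rfl hins,
      ← mul_sum, hpow, ← ih, bit_add]
    ring

lemma monomial_mul (T : Finset ι) (v x : ι → ZMod 2) :
    monomial T (v * x) = monomial T v * monomial T x := by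
  simp only [monomial, Pi.mul_apply, map_mul, prod_mul_distrib]

def indicator [DecidableEq ι] (S : Finset ι) (j : ι) : ZMod 2 := if j ∈ S then 1 else 0

lemma monomial_indicator [DecidableEq ι] (T S : Finset ι) :
    monomial T (indicator S) = if T ⊆ S then 1 else 0 := by
  split_ifs with h
  · exact prod_eq_one fun j hj => by rw [indicator, if_pos (h hj), map_one]
  · obtain ⟨j, hjT, hjS⟩ := not_subset.1 h
    exact prod_eq_zero hjT (by rw [indicator, if_neg hjS, bit_zero])

lemma eq_zero_of_forall_sum_mul_monomial_eq_zero [DecidableEq ι] [Fintype ι] {a : Finset ι → ZMod 8}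
    (h : ∀ x, ∑ T, a T * monomial T x = 0) : a = 0 := by
  funext S
  induction S using Finset.strongInduction with
  | H S ih =>
    rw [Pi.zero_apply, ← h (indicator S), sum_eq_single S]
    · simp [monomial_indicator]
    · intro T _ hTS
      by_cases hT : T ⊆ S
      · simp [ih T (Finset.ssubset_iff_subset_ne.2 ⟨hT, hTS⟩)]
      · simp [monomial_indicator, hT]
    · simp

end Monomials

lemma parity_eq_sum (v x : V n) :
    parity v x = ∑ T, weight #T * monomial T v * monomial T x := by
  simp_rw [parity, dotProduct, bit_sum_eq, powerset_univ, mul_assoc, ← monomial_mul]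
  rfl

lemma weight_mul_monomial_mem (T : Finset (Fin n)) :
    (fun x => weight #T * monomial T x) ∈ phaseGroup n := by
  induction T using Finset.strongInduction with
  | H S ih =>
    set g : Finset (Fin n) → V n → ZMod 8 :=
      fun T x => if T ⊆ S then weight #T * monomial T x else 0
    have hsum : parity (indicator S) = ∑ T, g T := by
      ext x
      simp [parity_eq_sum, monomial_indicator, g, Finset.sum_apply]
    have hgS : g S = parity (indicator S) - ∑ T ∈ univ.erase S, g T := by
      rw [hsum, ← add_sum_erase _ _ (mem_univ S), add_sub_cancel_right]
    have hg : g S = fun x => weight #S * monomial S x := by simp [g]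
    rw [← hg, hgS]
    refine sub_mem (AddSubgroup.subset_closure ⟨_, rfl⟩) (sum_mem fun T hT => ?_)
    by_cases hTS : T ⊆ S
    · simpa [g, hTS] using ih T (Finset.ssubset_iff_subset_ne.2 ⟨hTS, ne_of_mem_erase hT⟩)
    · simp only [g, hTS, if_false]
      exact zero_mem _

abbrev Coeffs (n : ℕ) := (T : Finset (Fin n)) → AddSubgroup.zmultiples (weight #T)

def coeffsToPhase : Coeffs n →+ (V n → ZMod 8) where
  toFun a x := ∑ T, (a T : ZMod 8) * monomial T x
  map_zero' := by ext; simp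
  map_add' a b := by ext; simp [add_mul, sum_add_distrib]

lemma coeffsToPhase_injective : Injective (coeffsToPhase (n := n)) := by
  refine (injective_iff_map_eq_zero _).2 fun a ha => funext fun T => Subtype.ext ?_
  have h := eq_zero_of_forall_sum_mul_monomial_eq_zero (a := fun T => (a T : ZMod 8))
    fun x => congrFun ha x
  exact congrFun h T

lemma range_coeffsToPhase : (coeffsToPhase (n := n)).range = phaseGroup n := by
  apply le_antisymm
  · rintro _ ⟨a, rfl⟩
    have ha : coeffsToPhase a = ∑ T, fun x => (a T : ZMod 8) * monomial T x := by
      ext x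
      simp [coeffsToPhase, Finset.sum_apply]
    refine ha ▸ sum_mem fun T _ => ?_
    obtain ⟨k, hk⟩ := AddSubgroup.mem_zmultiples_iff.1 (a T).2
    have hT : (fun x => (a T : ZMod 8) * monomial T x) = k • fun x => weight #T * monomial T x := by
      ext x
      simp [← hk, mul_assoc]
    exact hT ▸ zsmul_mem (weight_mul_monomial_mem T) k
  · refine (AddSubgroup.closure_le _).2 ?_
    rintro _ ⟨v, rfl⟩
    have hmem (T : Finset (Fin n)) : weight #T * monomial T v ∈ AddSubgroup.zmultiples (weight #T) :=
      AddSubgroup.mem_zmultiples_iff.2 ⟨(monomial T v).val, by simp [mul_comm]⟩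
    exact ⟨fun T => ⟨_, hmem T⟩, funext fun x => (parity_eq_sum v x).symm⟩

def weightExp : ℕ → ℕ
  | 1 => 3
  | 2 => 2
  | 3 => 1
  | _ => 0

lemma addOrderOf_weight : ∀ k, addOrderOf (weight k) = 2 ^ weightExp k
  | 0 => by simp [weight, weightExp]
  | 1 => addOrderOf_eq_prime_pow (n := 2) (by decide) (by decide)
  | 2 => addOrderOf_eq_prime_pow (n := 1) (by decide) (by decide)
  | 3 => addOrderOf_eq_prime_pow (n := 0) (by decide) (by decide)
  | k + 4 => by
    have h : (-2 : ZMod 8) ^ 3 = 0 := by decide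
    rw [weight, pow_add, h, mul_zero, addOrderOf_zero]
    rfl

lemma sum_choose_mul_weightExp (n : ℕ) :
    ∑ m ∈ range (n + 1), n.choose m * weightExp m = 3 * n + 2 * n.choose 2 + n.choose 3 := by
  calc ∑ m ∈ range (n + 1), n.choose m * weightExp m
      = ∑ m ∈ range (n + 4), n.choose m * weightExp m := by
        refine sum_subset (range_subset_range.2 (by omega)) fun m hm hm' => ?_
        simp only [mem_range] at hm hm'
        rw [Nat.choose_eq_zero_of_lt (by omega), zero_mul]
    _ = ∑ m ∈ range 4, n.choose m * weightExp m := by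
        refine (sum_subset (range_subset_range.2 (by omega)) fun m _ hm => ?_).symm
        obtain ⟨k, rfl⟩ : ∃ k, m = k + 4 := ⟨m - 4, by simp only [mem_range] at hm; omega⟩
        rfl
    _ = 3 * n + 2 * n.choose 2 + n.choose 3 := by
        simp [sum_range_succ, weightExp]
        ring

lemma card_coeffs : Nat.card (Coeffs n) = 2 ^ (3 * n + 2 * n.choose 2 + n.choose 3) := by
  simp_rw [Nat.card_pi, Nat.card_zmultiples, addOrderOf_weight]
  rw [prod_pow_eq_pow_sum, ← powerset_univ, sum_powerset_apply_card, card_univ,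
    Fintype.card_fin]
  simp_rw [smul_eq_mul, sum_choose_mul_weightExp]

lemma card_phaseGroup : Nat.card (phaseGroup n) = 2 ^ (3 * n + 2 * n.choose 2 + n.choose 3) := by
  rw [← range_coeffsToPhase, ← card_coeffs]
  exact Nat.card_congr (AddMonoidHom.ofInjective coeffsToPhase_injective).toEquiv.symm

def linearEquivEquivGL : (V n ≃ₗ[ZMod 2] V n) ≃ GL (Fin n) (ZMod 2) :=
  ((Matrix.GeneralLinearGroup.toLin.trans
    (LinearMap.GeneralLinearGroup.generalLinearEquiv (ZMod 2) (V n))).toEquiv).symm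

instance : Finite (V n ≃ₗ[ZMod 2] V n) := .of_equiv _ linearEquivEquivGL.symm

instance : Finite (monomialGroup n) := (Set.finite_range _).to_subtype

lemma card_linearEquiv :
    Nat.card (V n ≃ₗ[ZMod 2] V n) = ∏ i ∈ Icc 1 n, (2 ^ n - 2 ^ (i - 1)) := by
  rw [Nat.card_congr linearEquivEquivGL, card_GL_field, ZMod.card, Fin.prod_univ_eq_prod_range
    (fun i => 2 ^ n - 2 ^ i), ← Ico_add_one_right_eq_Icc, prod_Ico_eq_prod_range]
  simp

end CnotT

theorem stmt12_general {n : ℕ} :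
    Finite (cnotTGroup n) ∧
    Nat.card (cnotTGroup n) =
      2 ^ (3 * n + 2 * n.choose 2 + n.choose 3) *
        ∏ i ∈ Finset.Icc 1 n, (2 ^ n - 2 ^ (i - 1)) := by
  rw [CnotT.cnotTGroup_eq_monomialGroup, CnotT.card_monomialGroup, CnotT.card_linearEquiv,
    CnotT.card_phaseGroup, mul_comm]
  exact ⟨inferInstance, rfl⟩

theorem stmt12 {n : ℕ} (hn : 1 ≤ n) :
    Finite (cnotTGroup n) ∧
    Nat.card (cnotTGroup n) =
      2 ^ (3 * n + 2 * n.choose 2 + n.choose 3) *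
        ∏ i ∈ Finset.Icc 1 n, (2 ^ n - 2 ^ (i - 1)) :=
  stmt12_general
end
end

section
/- Fix n : ℕ. Let A_n be the subgroup of invertible linear operators on ℂ^{(Fin n → ZMod 2)} generated by: X_i (i : Fin n) with X_i e_x = e_{Function.update x i (x i + 1)}, and CNOT_{i,j} (i ≠ j) with CNOT_{i,j} e_x = e_{Function.update x j (x i + x j)}. Then an operator W belongs to A_n if and only if there exists a bijective affine map f : (Fin n → ZMod 2) → (Fin n → ZMod 2) over ZMod 2 such that W e_x = e_{f x} for every x : Fin n → ZMod 2. -/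
noncomputable section

/-- The generators of the group of `n`-qubit affine operators: the `X` gates and the
`CNOT` gates, each specified by its action on the standard basis vectors. -/
def affineGens (n : ℕ) : Set (LinearMap.GeneralLinearGroup ℂ (QState n)) :=
  {W | ∃ i : Fin n, ∀ x, W.val (e x) = e (Function.update x i (x i + 1))} ∪
  {W | ∃ i j : Fin n, i ≠ j ∧ ∀ x, W.val (e x) = e (Function.update x j (x i + x j))}

/-- The group `A_n` of `n`-qubit affine operators. -/
def affineGroup (n : ℕ) : Subgroup (LinearMap.GeneralLinearGroup ℂ (QState n)) :=
  Subgroup.closure (affineGens n)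

/-!
An operator that permutes the standard basis is determined by that permutation, and composing
such operators composes the permutations; so `A_n` is the image, under the permutation
representation, of the subgroup of the affine group of `𝔽₂ⁿ` generated by the `X` gates
(translations by unit vectors) and the `CNOT` gates (elementary transvections). That subgroup is
everything: an affine map is a translation composed with its linear part, unit translations
generate all translations, and over `𝔽₂`, where the only invertible diagonal matrix is `1`,
elementary transvections generate `GL_n`.
-/

open Matrix Function

section PermutationRepresentation

variable {α R : Type*} [DecidableEq α] [CommRing R]

def permGL : Equiv.Perm α →* LinearMap.GeneralLinearGroup R (α → R) where
  toFun σ := LinearMap.GeneralLinearGroup.ofLinearEquiv (LinearEquiv.funCongrLeft R R σ.symm)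
  map_one' := rfl
  map_mul' _ _ := rfl

theorem permGL_apply_single (σ : Equiv.Perm α) (x : α) :
    (permGL σ).val (Pi.single x (1 : R)) = Pi.single (σ x) 1 := by
  ext y
  change Pi.single x 1 (σ.symm y) = _
  simp only [Pi.single_apply, Equiv.symm_apply_eq]

theorem generalLinearGroup_ext_single [Finite α]
    {W₁ W₂ : LinearMap.GeneralLinearGroup R (α → R)}
    (h : ∀ x, W₁.val (Pi.single x 1) = W₂.val (Pi.single x 1)) : W₁ = W₂ :=
  Units.ext <| LinearMap.pi_ext' fun x => LinearMap.ext_ring (h x)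

theorem permGL_eq_iff [Finite α] {σ : Equiv.Perm α}
    {W : LinearMap.GeneralLinearGroup R (α → R)} :
    permGL σ = W ↔ ∀ x, W.val (Pi.single x 1) = Pi.single (σ x) 1 := by
  refine ⟨fun h x => ?_, fun h => generalLinearGroup_ext_single fun x => ?_⟩
  · rw [← h, permGL_apply_single]
  · rw [h, permGL_apply_single]

end PermutationRepresentation

section AffineGroup

def AffineEquiv.toPermHom {k P V : Type*} [Ring k] [AddCommGroup V] [Module k V]
    [AddTorsor V P] : (P ≃ᵃ[k] P) →* Equiv.Perm P where
  toFun := AffineEquiv.toEquiv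
  map_one' := rfl
  map_mul' _ _ := rfl

theorem AffineEquiv.eq_constVAdd_mul_toAffineEquiv_linear {k V : Type*} [Ring k]
    [AddCommGroup V] [Module k V] (f : V ≃ᵃ[k] V) :
    f = AffineEquiv.constVAdd k V (f 0) * f.linear.toAffineEquiv := by
  ext x
  have hlinear : f.linear x = f x - f 0 := by
    simpa using (f : V →ᵃ[k] V).linearMap_vsub x 0
  simp [AffineEquiv.coe_mul, hlinear]

theorem constVAdd_single_apply {ι k : Type*} [DecidableEq ι] [Ring k] (i : ι) (c : k)
    (x : ι → k) : AffineEquiv.constVAdd k (ι → k) (Pi.single i c) x = update x i (x i + c) := by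
  ext j
  rcases eq_or_ne j i with rfl | hj <;> simp [*, add_comm]

theorem transvection_mulVec {ι R : Type*} [Fintype ι] [DecidableEq ι] [CommRing R] (i j : ι)
    (c : R) (x : ι → R) :
    transvection i j c *ᵥ x = update x i (x i + c * x j) := by
  ext k
  rcases eq_or_ne k i with rfl | hk
  · simp [transvection, add_mulVec, single_mulVec]
  · simp [transvection, add_mulVec, single_mulVec, hk]

variable {ι : Type*} [Fintype ι] [DecidableEq ι]

theorem constVAdd_mem_of_forall_single {m : ℕ} [NeZero m]
    {H : Subgroup ((ι → ZMod m) ≃ᵃ[ZMod m] (ι → ZMod m))}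
    (h : ∀ i, AffineEquiv.constVAdd (ZMod m) (ι → ZMod m) (Pi.single i 1) ∈ H)
    (v : ι → ZMod m) : AffineEquiv.constVAdd (ZMod m) (ι → ZMod m) v ∈ H := by
  rw [← Finset.univ_sum_single v]
  refine Finset.sum_induction _ (fun v => AffineEquiv.constVAdd _ _ v ∈ H)
    (fun a b ha hb => ?_) (by rw [AffineEquiv.constVAdd_zero]; exact H.one_mem) (fun i _ => ?_)
  · rw [AffineEquiv.constVAdd_add]
    exact mul_mem ha hb
  · rw [← ZMod.natCast_zmod_val (v i), ← nsmul_one, Pi.single_smul,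
      AffineEquiv.constVAdd_nsmul]
    exact pow_mem (h i) _

theorem toAffineEquiv_mem_of_forall_transvection
    {H : Subgroup ((ι → ZMod 2) ≃ᵃ[ZMod 2] (ι → ZMod 2))}
    (h : ∀ i j (hij : i ≠ j),
      (SpecialLinearGroup.toLin' (SpecialLinearGroup.transvection hij 1)).toAffineEquiv ∈ H)
    (L : (ι → ZMod 2) ≃ₗ[ZMod 2] (ι → ZMod 2)) : L.toAffineEquiv ∈ H := by
  set M := LinearMap.toMatrix' (L : (ι → ZMod 2) →ₗ[ZMod 2] ι → ZMod 2)
  have hdet : M.det ≠ 0 := by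
    rw [LinearMap.det_toMatrix']
    exact L.isUnit_det'.ne_zero
  obtain ⟨g, hg, hgM⟩ : ∃ g ∈ H, ∀ x, g x = M *ᵥ x := by
    refine diagonal_transvection_induction_of_det_ne_zero
      (fun N => ∃ g ∈ H, ∀ x, g x = N *ᵥ x) M hdet (fun D hD => ?_) (fun t => ?_) ?_
    · have hD1 : D = 1 := by
        funext i
        have h_ne_zero : ∀ a : ZMod 2, a ≠ 0 → a = 1 := by decide
        rw [det_diagonal] at hD
        exact h_ne_zero _ (Finset.prod_ne_zero_iff.mp hD i (Finset.mem_univ i))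
      exact ⟨1, H.one_mem, fun x => by simp [hD1]⟩
    · obtain ⟨i, j, hij, c⟩ := t
      obtain rfl | rfl : c = 0 ∨ c = 1 := by revert c; decide
      · exact ⟨1, H.one_mem, fun x => by simp [TransvectionStruct.toMatrix_mk]⟩
      · exact ⟨_, h i j hij, fun x => rfl⟩
    · rintro A B - - ⟨gA, hgA, hA⟩ ⟨gB, hgB, hB⟩
      exact ⟨gA * gB, mul_mem hgA hgB, fun x => by
        simp [AffineEquiv.coe_mul, hA, hB, mulVec_mulVec]⟩
  convert hg
  ext x
  simp [M, hgM]

end AffineGroup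

def affineGL (n : ℕ) :
    ((Fin n → ZMod 2) ≃ᵃ[ZMod 2] (Fin n → ZMod 2)) →* LinearMap.GeneralLinearGroup ℂ (QState n) :=
  permGL.comp AffineEquiv.toPermHom

theorem affineGL_eq_iff {n : ℕ} {f : (Fin n → ZMod 2) ≃ᵃ[ZMod 2] (Fin n → ZMod 2)}
    {W : LinearMap.GeneralLinearGroup ℂ (QState n)} :
    affineGL n f = W ↔ ∀ x, W.val (e x) = e (f x) :=
  permGL_eq_iff

theorem affineGL_apply_e {n : ℕ} (f : (Fin n → ZMod 2) ≃ᵃ[ZMod 2] (Fin n → ZMod 2))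
    (x : Fin n → ZMod 2) : (affineGL n f).val (e x) = e (f x) :=
  permGL_apply_single _ x

theorem e_injective {n : ℕ} : Injective (e : (Fin n → ZMod 2) → QState n) := fun x y h => by
  by_contra hxy
  simpa [e, hxy] using congrFun h x

theorem affineGL_mem_affineGens_iff {n : ℕ} (f : (Fin n → ZMod 2) ≃ᵃ[ZMod 2] (Fin n → ZMod 2)) :
    affineGL n f ∈ affineGens n ↔
      (∃ i, ∀ x, f x = update x i (x i + 1)) ∨
        ∃ i j, i ≠ j ∧ ∀ x, f x = update x j (x i + x j) := by
  simp only [affineGens, Set.mem_union, Set.mem_ofPred_eq, affineGL_apply_e, e_injective.eq_iff]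

theorem affineGens_subset_range (n : ℕ) : affineGens n ⊆ Set.range (affineGL n) := by
  rintro W (⟨i, hW⟩ | ⟨i, j, hij, hW⟩)
  · refine ⟨AffineEquiv.constVAdd _ _ (Pi.single i 1), affineGL_eq_iff.mpr fun x => ?_⟩
    rw [hW, constVAdd_single_apply]
  · refine ⟨(SpecialLinearGroup.toLin' (SpecialLinearGroup.transvection hij.symm 1)).toAffineEquiv,
      affineGL_eq_iff.mpr fun x => ?_⟩
    change _ = e (transvection j i 1 *ᵥ x)
    rw [hW, transvection_mulVec, one_mul, add_comm]

theorem closure_preimage_affineGens (n : ℕ) :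
    Subgroup.closure (affineGL n ⁻¹' affineGens n) = ⊤ := by
  refine eq_top_iff.mpr fun f _ => ?_
  rw [f.eq_constVAdd_mul_toAffineEquiv_linear]
  refine mul_mem (constVAdd_mem_of_forall_single (fun i => ?_) _)
    (toAffineEquiv_mem_of_forall_transvection (fun i j hij => ?_) _)
  all_goals refine Subgroup.subset_closure ((affineGL_mem_affineGens_iff _).mpr ?_)
  · exact Or.inl ⟨i, constVAdd_single_apply i 1⟩
  · refine Or.inr ⟨j, i, hij.symm, fun x => ?_⟩
    change transvection i j 1 *ᵥ x = _
    rw [transvection_mulVec, one_mul, add_comm]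

theorem affineGroup_eq_range (n : ℕ) : affineGroup n = (affineGL n).range := by
  rw [affineGroup, ← Set.image_preimage_eq_of_subset (affineGens_subset_range n),
    ← MonoidHom.map_closure, closure_preimage_affineGens, MonoidHom.range_eq_map]

theorem stmt15 {n : ℕ} (W : LinearMap.GeneralLinearGroup ℂ (QState n)) :
    W ∈ affineGroup n ↔
      ∃ f : (Fin n → ZMod 2) ≃ᵃ[ZMod 2] (Fin n → ZMod 2),
        ∀ x : Fin n → ZMod 2, W.val (e x) = e (f x) := by
  simp only [affineGroup_eq_range, MonoidHom.mem_range, affineGL_eq_iff]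
end
end
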